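/- arXiv:1904.01796 — 4 statements merged into one kernel-verified Lean document; each statement's English description precedes it below -/
import Mathlib

section
/- For every dimension n ≥ 2 there exist constants c, C > 0 such that for all x ∈ ℝⁿ: c (1+|x|)^{-(n-1)/2} e^{|x|} ≤ ∫_{S^{n-1}} e^{ω·x} dσ(ω) ≤ C (1+|x|)^{-(n-1)/2} e^{|x|}. -/
open MeasureTheory Real Set Metric
open scoped ENNReal RealInnerProductSpace

noncomputable section

/-- `ℝⁿ` as a Euclidean space. -/
abbrev Euc (n : ℕ) : Type := EuclideanSpace ℝ (Fin n)

/-- The surface measure on the unit sphere `S^{n-1} ⊆ ℝⁿ`. -/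
def sphμ (n : ℕ) : Measure (sphere (0 : Euc n) 1) := (volume : Measure (Euc n)).toSphere

/-- `F x = ∫_{S^{n-1}} e^{ω ⋅ x} dσ(ω)`. -/
def sphF (n : ℕ) (x : Euc n) : ℝ :=
  ∫ ω : sphere (0 : Euc n) 1, exp ⟪(ω : Euc n), x⟫ ∂(sphμ n)

/-! ### Auxiliary lemmas -/

instance sphμ_finite (n : ℕ) : IsFiniteMeasure (sphμ n) :=
  inferInstanceAs (IsFiniteMeasure ((volume : Measure (Euc n)).toSphere))

lemma aux_le_of_sq_le_sq {a b : ℝ} (ha : 0 ≤ a) (hb : 0 ≤ b) (h : a ^ 2 ≤ b ^ 2) : a ≤ b := by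
  nlinarith

lemma aux_sqrt_pow (a : ℝ) (ha : 0 ≤ a) (k : ℕ) :
    (Real.sqrt a) ^ k = a ^ ((k : ℝ) / 2) := by
  rw [Real.sqrt_eq_rpow, ← Real.rpow_natCast (a ^ (1/2 : ℝ)) k, ← Real.rpow_mul ha]
  congr 1
  ring

lemma pyth {N : ℕ} (e x : Euc N) (he : ‖e‖ = 1) :
    ‖x‖ ^ 2 = ⟪e, x⟫ ^ 2 + ‖x - ⟪e, x⟫ • e‖ ^ 2 := by
  set t := ⟪e, x⟫ with ht
  have h0 : ⟪e, x - t • e⟫ = 0 := by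
    rw [inner_sub_right, real_inner_smul_right, real_inner_self_eq_norm_sq, he]
    ring
  have horth : ⟪t • e, x - t • e⟫ = 0 := by
    rw [real_inner_smul_left, h0, mul_zero]
  have hx : x = t • e + (x - t • e) := by abel
  have H := norm_add_sq_real (t • e) (x - t • e)
  rw [horth, ← hx] at H
  rw [H, norm_smul, he]
  simp [mul_pow, sq_abs]

lemma vol_pi_ball (d : ℕ) (ρ : ℝ) (hρ : 0 ≤ ρ) :
    (volume : Measure (Fin d → ℝ)) {y : Fin d → ℝ | ∑ i, (y i) ^ 2 ≤ ρ ^ 2}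
      = ENNReal.ofReal (ρ ^ d) * volume (closedBall (0 : Euc d) 1) := by
  have hψ := EuclideanSpace.volume_preserving_symm_measurableEquiv_toLp (Fin d)
  have hBmeas : MeasurableSet {y : Fin d → ℝ | ∑ i, (y i) ^ 2 ≤ ρ ^ 2} := by
    apply measurableSet_le
    · exact Finset.measurable_sum _ (fun i _ => (measurable_pi_apply i).pow_const 2)
    · exact measurable_const
  have hpre : (MeasurableEquiv.toLp 2 (Fin d → ℝ)).symm ⁻¹' {y : Fin d → ℝ | ∑ i, (y i) ^ 2 ≤ ρ ^ 2}
      = closedBall (0 : Euc d) ρ := by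
    ext x
    simp only [Set.mem_preimage, Set.mem_setOf_eq, mem_closedBall, dist_zero_right]
    have hx : ∀ i, (MeasurableEquiv.toLp 2 (Fin d → ℝ)).symm x i = x i := fun _ => rfl
    simp_rw [hx]
    rw [EuclideanSpace.norm_eq]
    simp_rw [Real.norm_eq_abs, sq_abs]
    rw [Real.sqrt_le_iff]
    constructor
    · intro h; exact ⟨hρ, h⟩
    · intro h; exact h.2
  rw [← hψ.measure_preimage hBmeas.nullMeasurableSet, hpre,
    Measure.addHaar_closedBall _ _ hρ, finrank_euclideanSpace_fin,
    Measure.addHaar_unitClosedBall_eq_addHaar_unitBall]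

/-- Volume of the cylinder `{x : ⟪e,x⟫ ∈ (a,b], ‖x - ⟪e,x⟫e‖ ≤ ρ}`. -/
lemma cyl_vol (m : ℕ) (e : Euc (m + 2)) (he : ‖e‖ = 1) (a b ρ : ℝ) (hρ : 0 ≤ ρ) :
    volume {x : Euc (m + 2) | ⟪e, x⟫ ∈ Ioc a b ∧ ‖x - ⟪e, x⟫ • e‖ ≤ ρ}
      = ENNReal.ofReal (b - a) * (ENNReal.ofReal (ρ ^ (m + 1)) *
          volume (closedBall (0 : Euc (m + 1)) 1)) := by
  set e₀ : Euc (m + 2) := EuclideanSpace.single 0 1 with he₀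
  have he₀n : ‖e₀‖ = 1 := by simp [he₀, EuclideanSpace.norm_single]
  set T : Euc (m + 2) ≃ₗᵢ[ℝ] Euc (m + 2) := Submodule.reflection (ℝ ∙ (e₀ - e))ᗮ with hT
  have hTe₀ : T e₀ = e := Submodule.reflection_sub (by rw [he₀n, he])
  set S : Set (Euc (m + 2)) :=
    {x | ⟪e, x⟫ ∈ Ioc a b ∧ ‖x - ⟪e, x⟫ • e‖ ≤ ρ} with hS
  have hcont1 : Continuous fun x : Euc (m + 2) => ⟪e, x⟫ :=
    continuous_const.inner continuous_id
  have hcont2 : Continuous fun x : Euc (m + 2) => ‖x - ⟪e, x⟫ • e‖ :=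
    (continuous_id.sub (hcont1.smul continuous_const)).norm
  have hSmeas : MeasurableSet S := by
    refine MeasurableSet.inter ?_ ?_
    · exact hcont1.measurable measurableSet_Ioc
    · exact hcont2.measurable measurableSet_Iic
  have hpreT : T ⁻¹' S = {x | ⟪e₀, x⟫ ∈ Ioc a b ∧ ‖x - ⟪e₀, x⟫ • e₀‖ ≤ ρ} := by
    ext x
    have h1 : ⟪e, T x⟫ = ⟪e₀, x⟫ := by
      conv_lhs => rw [← hTe₀]
      exact T.inner_map_map e₀ x
    have h3 : T (x - ⟪e₀, x⟫ • e₀) = T x - ⟪e₀, x⟫ • e := by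
      rw [T.map_sub, T.map_smul, hTe₀]
    have h2 : ‖T x - ⟪e₀, x⟫ • e‖ = ‖x - ⟪e₀, x⟫ • e₀‖ := by
      rw [← h3, T.norm_map]
    simp only [Set.mem_preimage, hS, Set.mem_setOf_eq, h1, h2]
  have hvolT : volume S = volume (T ⁻¹' S) :=
    (T.measurePreserving.measure_preimage hSmeas.nullMeasurableSet).symm
  rw [hvolT, hpreT]
  set B : Set (Fin (m + 1) → ℝ) := {y | ∑ i, (y i) ^ 2 ≤ ρ ^ 2} with hB
  have hBmeas : MeasurableSet B := by
    apply measurableSet_le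
    · exact Finset.measurable_sum _ (fun i _ => (measurable_pi_apply i).pow_const 2)
    · exact measurable_const
  have hψ := EuclideanSpace.volume_preserving_symm_measurableEquiv_toLp (Fin (m + 2))
  have hφ := volume_preserving_piFinSuccAbove (fun _ : Fin (m + 2) => ℝ) 0
  set φ := MeasurableEquiv.piFinSuccAbove (fun _ : Fin (m + 2) => ℝ) 0 with hφdef
  have key : {x : Euc (m + 2) | ⟪e₀, x⟫ ∈ Ioc a b ∧ ‖x - ⟪e₀, x⟫ • e₀‖ ≤ ρ}
      = (MeasurableEquiv.toLp 2 (Fin (m + 2) → ℝ)).symm ⁻¹' (φ ⁻¹' (Ioc a b ×ˢ B)) := by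
    ext x
    have hinner : ⟪e₀, x⟫ = x 0 := by
      rw [he₀, EuclideanSpace.inner_single_left]
      simp
    have hφx : φ ((MeasurableEquiv.toLp 2 (Fin (m + 2) → ℝ)).symm x)
        = (x 0, fun j => x ((0 : Fin (m + 2)).succAbove j)) := rfl
    have hsum : ∑ i, ‖(x - x 0 • e₀) i‖ ^ 2 = ∑ j : Fin (m + 1), (x (Fin.succ j)) ^ 2 := by
      rw [Fin.sum_univ_succ]
      have h0 : ((x - x 0 • e₀) 0) = 0 := by
        simp [he₀, EuclideanSpace.single_apply]
      have hs : ∀ j : Fin (m + 1), ((x - x 0 • e₀) (Fin.succ j)) = x (Fin.succ j) := by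
        intro j
        simp [he₀, EuclideanSpace.single_apply, (Fin.succ_ne_zero j)]
      rw [h0]
      simp only [hs, Real.norm_eq_abs, sq_abs]
      simp
    have hnorm : ‖x - x 0 • e₀‖ ≤ ρ ↔ ∑ j : Fin (m + 1), (x (Fin.succ j)) ^ 2 ≤ ρ ^ 2 := by
      rw [EuclideanSpace.norm_eq]
      simp_rw [← hsum]
      rw [Real.sqrt_le_iff]
      exact ⟨fun h => h.2, fun h => ⟨hρ, h⟩⟩
    simp only [Set.mem_setOf_eq, Set.mem_preimage, hφx, Set.mem_prod, hinner, hB,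
      Fin.succAbove_zero]
    rw [hnorm]
  rw [key, hψ.measure_preimage, hφ.measure_preimage, Measure.volume_eq_prod,
    Measure.prod_prod, Real.volume_Ioc, vol_pi_ball _ _ hρ]
  · exact ((measurableSet_Ioc.prod hBmeas)).nullMeasurableSet
  · exact (φ.measurable (measurableSet_Ioc.prod hBmeas)).nullMeasurableSet

def capSet (m : ℕ) (e : Euc (m + 2)) (h : ℝ) : Set (sphere (0 : Euc (m + 2)) 1) :=
  {ω | 1 - h ≤ ⟪e, (ω : Euc (m + 2))⟫}

def coneSet (m : ℕ) (e : Euc (m + 2)) (h : ℝ) : Set (Euc (m + 2)) :=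
  {x | x ≠ 0 ∧ ‖x‖ < 1 ∧ (1 - h) * ‖x‖ ≤ ⟪e, x⟫}

lemma capSet_meas (m : ℕ) (e : Euc (m + 2)) (h : ℝ) : MeasurableSet (capSet m e h) := by
  have : Continuous fun ω : sphere (0 : Euc (m + 2)) 1 => ⟪e, (ω : Euc (m + 2))⟫ :=
    continuous_const.inner continuous_subtype_val
  exact this.measurable measurableSet_Ici

lemma cap_cone (m : ℕ) (e : Euc (m + 2)) (h : ℝ) :
    sphμ (m + 2) (capSet m e h) * ENNReal.ofReal ((m + 2 : ℝ)⁻¹)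
      = volume (coneSet m e h) := by
  have mp := (volume : Measure (Euc (m + 2))).measurePreserving_homeomorphUnitSphereProd
  have hdim : Module.finrank ℝ (Euc (m + 2)) = m + 2 := finrank_euclideanSpace_fin
  rw [hdim] at mp
  set Φ := homeomorphUnitSphereProd (Euc (m + 2)) with hΦ
  have hΦ1 : ∀ y (hy : y ∈ ({0}ᶜ : Set (Euc (m + 2)))),
      ((Φ ⟨y, hy⟩).1 : Euc (m + 2)) = ‖y‖⁻¹ • y := fun y hy => by
    simp [hΦ, homeomorphUnitSphereProd, homeomorphSphereProd]
  have hΦ2 : ∀ y (hy : y ∈ ({0}ᶜ : Set (Euc (m + 2)))),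
      ((Φ ⟨y, hy⟩).2 : ℝ) = ‖y‖ := fun y hy => by
    simp [hΦ, homeomorphUnitSphereProd, homeomorphSphereProd]
  set A := capSet m e h
  have hAmeas : MeasurableSet A := capSet_meas m e h
  have hprodmeas : MeasurableSet (A ×ˢ (Iio ⟨1, mem_Ioi.2 one_pos⟩ : Set (Ioi (0:ℝ)))) :=
    hAmeas.prod measurableSet_Iio
  have h1 := mp.measure_preimage hprodmeas.nullMeasurableSet
  have h2 : ((volume : Measure (Euc (m+2))).toSphere.prod
        (Measure.volumeIoiPow (m + 2 - 1))) (A ×ˢ (Iio ⟨1, mem_Ioi.2 one_pos⟩))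
      = sphμ (m + 2) A * ENNReal.ofReal ((m + 2 : ℝ)⁻¹) := by
    rw [Measure.prod_prod, Measure.volumeIoiPow_apply_Iio]
    norm_num [show m + 2 - 1 = m + 1 from rfl]
    congr 1
    ring_nf
  have h3 : (volume.comap (Subtype.val : ({0}ᶜ : Set (Euc (m+2))) → Euc (m+2)))
        (Φ ⁻¹' (A ×ˢ (Iio ⟨1, mem_Ioi.2 one_pos⟩)))
      = volume (Subtype.val '' (Φ ⁻¹' (A ×ˢ (Iio ⟨1, mem_Ioi.2 one_pos⟩)))) := by
    exact comap_subtype_coe_apply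
      (measurableSet_singleton (0 : Euc (m+2))).compl _ _
  have h4 : Subtype.val '' (Φ ⁻¹' (A ×ˢ (Iio ⟨1, mem_Ioi.2 one_pos⟩))) = coneSet m e h := by
    ext x
    simp only [Set.mem_image, Set.mem_preimage, Set.mem_prod, coneSet, Set.mem_setOf_eq]
    constructor
    · rintro ⟨⟨y, hy0⟩, ⟨hmem, rfl⟩⟩
      have hy0' : y ≠ 0 := hy0
      have hy : 0 < ‖y‖ := norm_pos_iff.2 hy0'
      obtain ⟨hcap, hlt⟩ := hmem
      have hlt' : ‖y‖ < 1 := by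
        rw [← hΦ2 y hy0]; exact hlt
      have hcap' : 1 - h ≤ ⟪e, ‖y‖⁻¹ • y⟫ := by rw [← hΦ1 y hy0]; exact hcap
      rw [real_inner_smul_right] at hcap'
      refine ⟨hy0', hlt', ?_⟩
      rw [mul_comm]
      calc ‖y‖ * (1 - h) ≤ ‖y‖ * (‖y‖⁻¹ * ⟪e, y⟫) := by
            exact mul_le_mul_of_nonneg_left hcap' hy.le
        _ = ⟪e, y⟫ := by field_simp
    · rintro ⟨hx0, hlt, hang⟩
      refine ⟨⟨x, hx0⟩, ⟨⟨?_, ?_⟩, rfl⟩⟩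
      · show 1 - h ≤ ⟪e, ((Φ ⟨x, hx0⟩).1 : Euc (m + 2))⟫
        rw [hΦ1 x hx0]
        have hx : 0 < ‖x‖ := norm_pos_iff.2 hx0
        rw [real_inner_smul_right, le_inv_mul_iff₀ hx, mul_comm]
        exact hang
      · show ((Φ ⟨x, hx0⟩).2 : ℝ) < 1
        rw [hΦ2 x hx0]
        exact hlt
  rw [← h2, ← h1, h3, h4]

/-! ### Cone sandwich -/

lemma cone_subset_cyl (m : ℕ) (e : Euc (m + 2)) (he : ‖e‖ = 1) {h : ℝ}
    (h0 : 0 < h) (h12 : h ≤ 1/2) :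
    coneSet m e h ⊆ {x | ⟪e, x⟫ ∈ Ioc (0:ℝ) 1 ∧ ‖x - ⟪e, x⟫ • e‖ ≤ Real.sqrt (1 - (1-h)^2)} := by
  set s := Real.sqrt (1 - (1-h)^2) with hs
  have hs2 : s ^ 2 = 1 - (1-h)^2 := Real.sq_sqrt (by nlinarith)
  have hs0 : 0 ≤ s := Real.sqrt_nonneg _
  rintro x ⟨hx0, hlt, hang⟩
  have hxn : 0 < ‖x‖ := norm_pos_iff.2 hx0
  set t := ⟪e, x⟫ with ht
  set w := ‖x - t • e‖ with hw
  have hP : ‖x‖ ^ 2 = t ^ 2 + w ^ 2 := pyth e x he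
  have hw0 : 0 ≤ w := norm_nonneg _
  have htpos : 0 < t := lt_of_lt_of_le (by nlinarith) hang
  have ht1 : t ≤ 1 := by
    have := real_inner_le_norm e x
    rw [he, one_mul] at this
    exact le_trans this hlt.le
  have hsq : (1-h)^2 * ‖x‖^2 ≤ t^2 := by
    have h1h : 0 ≤ (1-h) * ‖x‖ := by nlinarith
    nlinarith
  refine ⟨⟨htpos, ht1⟩, ?_⟩
  apply aux_le_of_sq_le_sq hw0 hs0
  have e1 : ‖x‖^2 * s^2 = ‖x‖^2 - (1-h)^2 * ‖x‖^2 := by rw [hs2]; ring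
  have e2 : w^2 ≤ ‖x‖^2 * s^2 := by linarith
  have e3 : ‖x‖^2 ≤ 1 := by nlinarith
  nlinarith [mul_nonneg (sub_nonneg.2 e3) (sq_nonneg s)]

lemma cyl_subset_cone (m : ℕ) (e : Euc (m + 2)) (he : ‖e‖ = 1) {h : ℝ}
    (h0 : 0 < h) (h12 : h ≤ 1/2) :
    {x | ⟪e, x⟫ ∈ Ioc (1/4 : ℝ) (1/2) ∧ ‖x - ⟪e, x⟫ • e‖ ≤ Real.sqrt (1 - (1-h)^2) / 4}
      ⊆ coneSet m e h := by
  set s := Real.sqrt (1 - (1-h)^2) with hs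
  have hs2 : s ^ 2 = 1 - (1-h)^2 := Real.sq_sqrt (by nlinarith)
  have hs0 : 0 ≤ s := Real.sqrt_nonneg _
  have hs1 : s ≤ 1 := by
    apply aux_le_of_sq_le_sq hs0 zero_le_one
    rw [hs2]; nlinarith
  rintro x ⟨⟨ht1, ht2⟩, hwle⟩
  set t := ⟪e, x⟫ with ht
  set w := ‖x - t • e‖ with hw
  have hP : ‖x‖ ^ 2 = t ^ 2 + w ^ 2 := pyth e x he
  have hw0 : 0 ≤ w := norm_nonneg _
  have hx0 : x ≠ 0 := by
    intro hx
    rw [hx, inner_zero_right] at ht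
    rw [ht] at ht1
    norm_num at ht1
  have hxn : 0 ≤ ‖x‖ := norm_nonneg _
  refine ⟨hx0, ?_, ?_⟩
  · nlinarith
  · have hsq : ((1-h) * ‖x‖) ^ 2 ≤ t ^ 2 := by
      have h1 : w^2 ≤ s^2/16 := by nlinarith
      have h2 : s^2 * t^2 ≥ s^2/16 := by
        nlinarith [mul_nonneg (by nlinarith : (0:ℝ) ≤ t^2 - 1/16) (sq_nonneg s)]
      nlinarith
    exact aux_le_of_sq_le_sq (by nlinarith) (by linarith) hsq

/-! ### Cap measure bounds -/

lemma K_pos (d : ℕ) : 0 < (volume (closedBall (0 : Euc d) 1)).toReal := by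
  refine ENNReal.toReal_pos ?_ (ne_of_lt measure_closedBall_lt_top)
  refine (lt_of_lt_of_le (measure_ball_pos volume 0 one_pos) (measure_mono ball_subset_closedBall)).ne'

lemma cap_lower (m : ℕ) (e : Euc (m + 2)) (he : ‖e‖ = 1) {h : ℝ}
    (h0 : 0 < h) (h12 : h ≤ 1/2) :
    ENNReal.ofReal ((((m:ℝ) + 2) * (volume (closedBall (0 : Euc (m+1)) 1)).toReal / 4 ^ (m + 3))
        * h ^ (((m:ℝ) + 1) / 2)) ≤ sphμ (m + 2) (capSet m e h) := by
  set κ := volume (closedBall (0 : Euc (m+1)) 1) with hκ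
  set K := κ.toReal with hKdef
  have hK : 0 < K := K_pos (m+1)
  have hκofK : κ = ENNReal.ofReal K := (ENNReal.ofReal_toReal (ne_of_lt measure_closedBall_lt_top)).symm
  set s := Real.sqrt (1 - (1-h)^2) with hs
  have hs0 : 0 ≤ s := Real.sqrt_nonneg _
  have hkey : h ^ (((m:ℝ) + 1) / 2) ≤ s ^ (m + 1) := by
    have h1 : Real.sqrt h ≤ s := Real.sqrt_le_sqrt (by nlinarith)
    have h2 : (Real.sqrt h) ^ (m+1) ≤ s ^ (m+1) := pow_le_pow_left₀ (Real.sqrt_nonneg h) h1 (m+1)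
    rw [aux_sqrt_pow h h0.le] at h2
    convert h2 using 2
    push_cast
    ring
  have hcyl := cyl_vol m e he (1/4) (1/2) (s/4) (by positivity)
  have hsub := cyl_subset_cone m e he h0 h12
  have hmono := measure_mono (μ := (volume : Measure (Euc (m+2)))) hsub
  rw [hcyl] at hmono
  have hcc := cap_cone m e h
  rw [← hcc] at hmono
  -- hmono : ofReal(1/2-1/4) * (ofReal((s/4)^(m+1)) * κ) ≤ σ(cap) * ofReal((m+2)⁻¹)
  have hne0 : (ENNReal.ofReal ((m + 2 : ℝ)⁻¹)) ≠ 0 := by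
    simp only [ne_eq, ENNReal.ofReal_eq_zero, not_le]
    positivity
  have hnetop : (ENNReal.ofReal ((m + 2 : ℝ)⁻¹)) ≠ ∞ := ENNReal.ofReal_ne_top
  rw [← ENNReal.mul_le_mul_iff_left hne0 hnetop]
  refine le_trans ?_ hmono
  rw [← hκ, hκofK, ← ENNReal.ofReal_mul (by positivity),
    ← ENNReal.ofReal_mul (pow_nonneg (div_nonneg hs0 (by norm_num)) _),
    ← ENNReal.ofReal_mul (by norm_num)]
  apply ENNReal.ofReal_le_ofReal
  have hm2 : (0:ℝ) < (m:ℝ) + 2 := by positivity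
  have e1 : ((m:ℝ) + 2) * K / 4 ^ (m + 3) * h ^ (((m:ℝ) + 1) / 2) * ((m:ℝ) + 2)⁻¹
      = K * h ^ (((m:ℝ) + 1) / 2) / 4 ^ (m + 3) := by
    field_simp
  have e2 : (1/2 - 1/4 : ℝ) * ((s/4) ^ (m+1) * K) = K * s ^ (m+1) / 4 ^ (m + 2) := by
    rw [div_pow]
    field_simp
    ring
  rw [e1, e2]
  have hnum : K * h ^ (((m:ℝ) + 1) / 2) ≤ K * s ^ (m+1) := mul_le_mul_of_nonneg_left hkey hK.le
  have hd : (4:ℝ) ^ (m+2) ≤ 4 ^ (m+3) := pow_le_pow_right₀ (by norm_num) (by omega)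
  exact div_le_div₀ (mul_nonneg hK.le (pow_nonneg hs0 _)) hnum (by positivity) hd


lemma cap_upper (m : ℕ) (e : Euc (m + 2)) (he : ‖e‖ = 1) {h : ℝ}
    (h0 : 0 < h) (h12 : h ≤ 1/2) :
    sphμ (m + 2) (capSet m e h)
      ≤ ENNReal.ofReal ((((m:ℝ) + 2) * (2:ℝ) ^ (((m:ℝ) + 1) / 2)
          * (volume (closedBall (0 : Euc (m+1)) 1)).toReal) * h ^ (((m:ℝ) + 1) / 2)) := by
  set κ := volume (closedBall (0 : Euc (m+1)) 1) with hκ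
  set K := κ.toReal with hKdef
  have hK : 0 < K := K_pos (m+1)
  have hκofK : κ = ENNReal.ofReal K :=
    (ENNReal.ofReal_toReal (ne_of_lt measure_closedBall_lt_top)).symm
  set s := Real.sqrt (1 - (1-h)^2) with hs
  have hs0 : 0 ≤ s := Real.sqrt_nonneg _
  have hkey : s ^ (m + 1) ≤ (2:ℝ) ^ (((m:ℝ) + 1) / 2) * h ^ (((m:ℝ) + 1) / 2) := by
    have h1 : s ≤ Real.sqrt (2 * h) := Real.sqrt_le_sqrt (by nlinarith)
    have h2 : s ^ (m+1) ≤ (Real.sqrt (2*h)) ^ (m+1) := pow_le_pow_left₀ hs0 h1 (m+1)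
    rw [aux_sqrt_pow (2*h) (by positivity)] at h2
    rw [Real.mul_rpow (by norm_num) h0.le] at h2
    convert h2 using 3 <;> push_cast <;> ring
  have hcyl := cyl_vol m e he 0 1 s hs0
  have hsub := cone_subset_cyl m e he h0 h12
  have hmono := measure_mono (μ := (volume : Measure (Euc (m+2)))) hsub
  rw [hcyl] at hmono
  have hcc := cap_cone m e h
  rw [← hcc] at hmono
  have hne0 : (ENNReal.ofReal ((m + 2 : ℝ)⁻¹)) ≠ 0 := by
    simp only [ne_eq, ENNReal.ofReal_eq_zero, not_le]
    positivity
  have hnetop : (ENNReal.ofReal ((m + 2 : ℝ)⁻¹)) ≠ ∞ := ENNReal.ofReal_ne_top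
  rw [← ENNReal.mul_le_mul_iff_left hne0 hnetop]
  refine le_trans hmono ?_
  rw [← hκ, hκofK, ← ENNReal.ofReal_mul (pow_nonneg hs0 _),
    ← ENNReal.ofReal_mul (by norm_num), ← ENNReal.ofReal_mul (by positivity)]
  apply ENNReal.ofReal_le_ofReal
  have hm2 : (0:ℝ) < (m:ℝ) + 2 := by positivity
  have e2 : ((m:ℝ) + 2) * (2:ℝ) ^ (((m:ℝ) + 1) / 2) * K * h ^ (((m:ℝ) + 1) / 2) * ((m:ℝ) + 2)⁻¹
      = (2:ℝ) ^ (((m:ℝ) + 1) / 2) * h ^ (((m:ℝ) + 1) / 2) * K := by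
    field_simp
  rw [e2]
  have : (1 - 0 : ℝ) * (s ^ (m+1) * K) = s ^ (m+1) * K := by ring
  rw [this]
  exact mul_le_mul_of_nonneg_right hkey hK.le

lemma sph_univ_pos (m : ℕ) :
    0 < (sphμ (m + 2) Set.univ).toReal := by
  apply ENNReal.toReal_pos
  · rw [sphμ, Measure.toSphere_apply_univ]
    refine (ENNReal.mul_pos ?_ (measure_ball_pos volume 0 one_pos).ne').ne'
    simp [finrank_euclideanSpace_fin]
  · exact measure_ne_top _ _

lemma cap_upper_all (m : ℕ) (e : Euc (m + 2)) (he : ‖e‖ = 1) {h : ℝ} (h0 : 0 < h) :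
    sphμ (m + 2) (capSet m e h)
      ≤ ENNReal.ofReal (((((m:ℝ) + 2) * (2:ℝ) ^ (((m:ℝ) + 1) / 2)
            * (volume (closedBall (0 : Euc (m+1)) 1)).toReal)
          + (sphμ (m + 2) Set.univ).toReal * (2:ℝ) ^ (((m:ℝ) + 1) / 2))
          * h ^ (((m:ℝ) + 1) / 2)) := by
  set q : ℝ := ((m:ℝ) + 1) / 2 with hq
  have hq0 : (0:ℝ) ≤ q := by positivity
  set C1 : ℝ := ((m:ℝ) + 2) * (2:ℝ) ^ q * (volume (closedBall (0 : Euc (m+1)) 1)).toReal with hC1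
  set T : ℝ := (sphμ (m + 2) Set.univ).toReal with hT
  have hC1pos : 0 < C1 := by
    have := K_pos (m+1)
    have h2 : (0:ℝ) < (2:ℝ) ^ q := Real.rpow_pos_of_pos (by norm_num) q
    positivity
  have hTpos : 0 < T := sph_univ_pos m
  have hhq : (0:ℝ) < h ^ q := Real.rpow_pos_of_pos h0 q
  rcases le_or_gt h (1/2) with h12 | h12
  · refine le_trans (cap_upper m e he h0 h12) (ENNReal.ofReal_le_ofReal ?_)
    rw [← hC1, ← hq]
    have : 0 ≤ T * (2:ℝ) ^ q * h ^ q := by positivity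
    nlinarith
  · have h1 : sphμ (m + 2) (capSet m e h) ≤ ENNReal.ofReal T := by
      rw [hT, ENNReal.ofReal_toReal (measure_ne_top _ _)]
      exact measure_mono (Set.subset_univ _)
    refine le_trans h1 (ENNReal.ofReal_le_ofReal ?_)
    have h2q : (1:ℝ) ≤ (2:ℝ) ^ q * h ^ q := by
      rw [← Real.mul_rpow (by norm_num) h0.le]
      apply Real.one_le_rpow (by linarith) hq0
    have : 0 ≤ C1 * h ^ q := by positivity
    nlinarith

/-! ### Summability -/

lemma summable_aux (q : ℝ) (hq : 0 ≤ q) (d : ℕ) (hqd : q ≤ d) :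
    Summable (fun k : ℕ => Real.exp (-(k:ℝ)) * ((k:ℝ) + 1) ^ q) := by
  set c : ℝ := Real.exp (-1) with hc
  have hc0 : 0 < c := Real.exp_pos _
  have hc1 : c < 1 := Real.exp_lt_one_iff.2 (by norm_num)
  have hg : Summable (fun k : ℕ => (k:ℝ) ^ d * c ^ k) :=
    summable_pow_mul_geometric_of_norm_lt_one d (by rw [Real.norm_eq_abs, abs_of_pos hc0]; exact hc1)
  have hg' : Summable (fun k : ℕ => ((k:ℕ) + 1 : ℝ) ^ d * c ^ (k + 1)) := by
    have := (summable_nat_add_iff 1).2 hg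
    simpa using this
  have hg'' : Summable (fun k : ℕ => c⁻¹ * (((k:ℕ) + 1 : ℝ) ^ d * c ^ (k + 1))) :=
    hg'.mul_left _
  apply Summable.of_nonneg_of_le (fun k => by positivity) _ hg''
  intro k
  have hek : Real.exp (-(k:ℝ)) = c ^ k := by
    rw [hc, ← Real.exp_nat_mul]
    congr 1
    ring
  have hb : ((k:ℝ) + 1) ^ q ≤ ((k:ℝ) + 1) ^ (d:ℝ) :=
    Real.rpow_le_rpow_of_exponent_le (by push_cast; linarith [Nat.cast_nonneg (α := ℝ) k]) hqd
  have hbd : ((k:ℝ) + 1) ^ (d:ℝ) = ((k:ℝ) + 1) ^ (d:ℕ) := Real.rpow_natCast _ d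
  calc Real.exp (-(k:ℝ)) * ((k:ℝ) + 1) ^ q ≤ c ^ k * ((k:ℝ) + 1) ^ (d:ℕ) := by
        rw [hek]
        exact mul_le_mul_of_nonneg_left (hb.trans_eq hbd) (by positivity)
    _ = c⁻¹ * (((k:ℕ) + 1 : ℝ) ^ d * c ^ (k + 1)) := by
        push_cast
        rw [pow_succ]
        field_simp

/-! ### rpow comparison helpers -/

lemma aux_rpow_upper {q r : ℝ} (hq : 0 ≤ q) (hr : 1 ≤ r) :
    r ^ (-q) ≤ 2 ^ q * (1 + r) ^ (-q) := by
  have h0 : (0:ℝ) < r := lt_of_lt_of_le one_pos hr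
  have h1 : (0:ℝ) < 1 + r := by linarith
  have hrq : 0 < r ^ q := Real.rpow_pos_of_pos h0 q
  have h1q : 0 < (1 + r) ^ q := Real.rpow_pos_of_pos h1 q
  have h2 : (1 + r) ^ q ≤ 2 ^ q * r ^ q := by
    calc (1 + r) ^ q ≤ (2 * r) ^ q := Real.rpow_le_rpow h1.le (by linarith) hq
      _ = 2 ^ q * r ^ q := Real.mul_rpow (by norm_num) h0.le
  rw [Real.rpow_neg h0.le, Real.rpow_neg h1.le]
  have := (div_le_div_iff₀ hrq h1q).2 (by linarith : 1 * (1 + r) ^ q ≤ 2 ^ q * r ^ q)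
  calc (r ^ q)⁻¹ = 1 / r ^ q := (one_div _).symm
    _ ≤ 2 ^ q / (1 + r) ^ q := this
    _ = 2 ^ q * ((1 + r) ^ q)⁻¹ := by rw [div_eq_mul_inv]

lemma aux_rpow_lower {q r : ℝ} (hq : 0 ≤ q) (hr : 1 ≤ r) :
    2 ^ (-q) * (1 + r) ^ (-q) ≤ ((2 * r)⁻¹) ^ q := by
  have h0 : (0:ℝ) < r := lt_of_lt_of_le one_pos hr
  have h1 : (0:ℝ) < 1 + r := by linarith
  have h2r : (0:ℝ) < 2 * r := by linarith
  rw [← Real.rpow_neg_one (2 * r), ← Real.rpow_mul h2r.le]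
  rw [show (-1 : ℝ) * q = -q by ring]
  have h2 : (2 * r) ^ q ≤ (2 * (1 + r)) ^ q := Real.rpow_le_rpow h2r.le (by linarith) hq
  have h3 : (2 * (1 + r)) ^ q = 2 ^ q * (1 + r) ^ q := Real.mul_rpow (by norm_num) h1.le
  have h2rq : 0 < (2 * r) ^ q := Real.rpow_pos_of_pos h2r q
  have h21q : 0 < 2 ^ q * (1 + r) ^ q := by
    have := Real.rpow_pos_of_pos h1 q
    have h2q : (0:ℝ) < 2 ^ q := Real.rpow_pos_of_pos (by norm_num) q
    positivity
  rw [Real.rpow_neg h2r.le, Real.rpow_neg (by norm_num : (0:ℝ) ≤ 2),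
    Real.rpow_neg h1.le]
  rw [← mul_inv]
  apply inv_anti₀ h2rq
  rw [← h3]
  exact h2

/-! ### Constants -/

def qc (m : ℕ) : ℝ := ((m:ℝ) + 1) / 2
def KK (m : ℕ) : ℝ := (volume (closedBall (0 : Euc (m+1)) 1)).toReal
def cLc (m : ℕ) : ℝ := (((m:ℝ) + 2) * KK m) / 4 ^ (m + 3)
def CUc (m : ℕ) : ℝ := ((m:ℝ) + 2) * (2:ℝ) ^ (qc m) * KK m
  + (sphμ (m+2) Set.univ).toReal * (2:ℝ) ^ (qc m)
def Smc (m : ℕ) : ℝ := ∑' k : ℕ, Real.exp (-(k:ℝ)) * ((k:ℝ) + 1) ^ (qc m)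

lemma qc_nonneg (m : ℕ) : 0 ≤ qc m := by unfold qc; positivity

lemma cLc_pos (m : ℕ) : 0 < cLc m := by
  have := K_pos (m+1)
  unfold cLc KK
  positivity

lemma CUc_pos (m : ℕ) : 0 < CUc m := by
  have h1 := K_pos (m+1)
  have h2 := sph_univ_pos m
  have h3 : (0:ℝ) < (2:ℝ) ^ (qc m) := Real.rpow_pos_of_pos (by norm_num) _
  unfold CUc KK
  positivity

lemma Smc_summable (m : ℕ) : Summable (fun k : ℕ => Real.exp (-(k:ℝ)) * ((k:ℝ) + 1) ^ (qc m)) := by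
  apply summable_aux (qc m) (qc_nonneg m) (m + 1)
  unfold qc
  push_cast
  nlinarith [Nat.cast_nonneg (α := ℝ) m]

lemma Smc_pos (m : ℕ) : 0 < Smc m := by
  have h0 : Real.exp (-(0:ℕ):ℝ) * (((0:ℕ):ℝ) + 1) ^ (qc m) = 1 := by
    norm_num
  have := Summable.le_tsum (Smc_summable m) 0 (fun i _ => by positivity)
  rw [h0] at this
  unfold Smc
  linarith

/-! ### Integral representation and bounds -/

lemma sphF_eq (n : ℕ) (x : Euc n) :
    sphF n x = (∫⁻ ω : sphere (0 : Euc n) 1,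
        ENNReal.ofReal (exp ⟪(ω : Euc n), x⟫) ∂(sphμ n)).toReal := by
  rw [sphF, integral_eq_lintegral_of_nonneg_ae]
  · exact ae_of_all _ fun ω => (exp_pos _).le
  · exact (Real.continuous_exp.comp
      (continuous_subtype_val.inner continuous_const)).aestronglyMeasurable

lemma G_le_univ (n : ℕ) (x : Euc n) :
    (∫⁻ ω : sphere (0 : Euc n) 1, ENNReal.ofReal (exp ⟪(ω : Euc n), x⟫) ∂(sphμ n))
      ≤ ENNReal.ofReal (exp ‖x‖ * (sphμ n Set.univ).toReal) := by
  have hpt : ∀ ω : sphere (0 : Euc n) 1,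
      ENNReal.ofReal (exp ⟪(ω : Euc n), x⟫) ≤ ENNReal.ofReal (exp ‖x‖) := by
    intro ω
    apply ENNReal.ofReal_le_ofReal
    apply Real.exp_le_exp.2
    have h1 := real_inner_le_norm (ω : Euc n) x
    have h2 : ‖(ω : Euc n)‖ = 1 := mem_sphere_zero_iff_norm.mp ω.2
    rw [h2, one_mul] at h1
    exact h1
  calc (∫⁻ ω : sphere (0 : Euc n) 1, ENNReal.ofReal (exp ⟪(ω : Euc n), x⟫) ∂(sphμ n))
      ≤ (∫⁻ _ : sphere (0 : Euc n) 1, ENNReal.ofReal (exp ‖x‖) ∂(sphμ n)) :=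
        lintegral_mono hpt
    _ = ENNReal.ofReal (exp ‖x‖) * sphμ n Set.univ := lintegral_const _
    _ = ENNReal.ofReal (exp ‖x‖ * (sphμ n Set.univ).toReal) := by
        rw [ENNReal.ofReal_mul (Real.exp_pos _).le,
          ENNReal.ofReal_toReal (measure_ne_top _ _)]

lemma G_upper (m : ℕ) (x : Euc (m+2)) (hr : 1 ≤ ‖x‖) :
    (∫⁻ ω : sphere (0 : Euc (m+2)) 1,
        ENNReal.ofReal (exp ⟪(ω : Euc (m+2)), x⟫) ∂(sphμ (m+2)))
      ≤ ENNReal.ofReal ((CUc m * Smc m) * (exp ‖x‖ * ‖x‖ ^ (-(qc m)))) := by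
  set r := ‖x‖ with hrdef
  have hr0 : (0:ℝ) < r := lt_of_lt_of_le one_pos hr
  have hx0 : x ≠ 0 := by
    intro h
    rw [h, norm_zero] at hrdef
    rw [← hrdef] at hr0
    exact lt_irrefl _ hr0
  set e : Euc (m+2) := ‖x‖⁻¹ • x with hedef
  have he : ‖e‖ = 1 := norm_smul_inv_norm hx0
  have hxe : ∀ ω : sphere (0 : Euc (m+2)) 1,
      ⟪(ω : Euc (m+2)), x⟫ = r * ⟪e, (ω : Euc (m+2))⟫ := by
    intro ω
    rw [real_inner_comm]
    conv_lhs => rw [show x = r • e from (smul_inv_smul₀ (norm_ne_zero_iff.2 hx0) x).symm]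
    rw [real_inner_smul_left]
  set q := qc m with hqdef
  have hq0 : 0 ≤ q := qc_nonneg m
  -- pointwise bound
  have hpt : ∀ ω : sphere (0 : Euc (m+2)) 1,
      ENNReal.ofReal (exp ⟪(ω : Euc (m+2)), x⟫)
        ≤ ∑' k : ℕ, Set.indicator (capSet m e (((k:ℝ)+1)/r))
            (fun _ => ENNReal.ofReal (Real.exp (r - (k:ℝ)))) ω := by
    intro ω
    set t := ⟪e, (ω : Euc (m+2))⟫ with htdef
    have ht1 : t ≤ 1 := by
      have h1 := real_inner_le_norm e (ω : Euc (m+2))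
      rw [he, one_mul, mem_sphere_zero_iff_norm.mp ω.2] at h1
      exact h1
    set k : ℕ := ⌊r * (1 - t)⌋₊ with hkdef
    have hk1 : (k:ℝ) ≤ r * (1 - t) := Nat.floor_le (by nlinarith)
    have hk2 : r * (1 - t) < (k:ℝ) + 1 := Nat.lt_floor_add_one _
    have hmem : ω ∈ capSet m e (((k:ℝ)+1)/r) := by
      show 1 - ((k:ℝ)+1)/r ≤ t
      have h' : 1 - t ≤ ((k:ℝ)+1)/r := by
        rw [le_div_iff₀ hr0]
        nlinarith
      linarith
    have hbound : ENNReal.ofReal (exp ⟪(ω : Euc (m+2)), x⟫)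
        ≤ ENNReal.ofReal (Real.exp (r - (k:ℝ))) := by
      apply ENNReal.ofReal_le_ofReal
      apply Real.exp_le_exp.2
      rw [hxe ω, ← htdef]
      nlinarith
    refine le_trans ?_ (ENNReal.le_tsum k)
    rw [Set.indicator_of_mem hmem]
    exact hbound
  have hcapmeas : ∀ k : ℕ, MeasurableSet (capSet m e (((k:ℝ)+1)/r)) :=
    fun k => capSet_meas m e _
  calc (∫⁻ ω : sphere (0 : Euc (m+2)) 1,
        ENNReal.ofReal (exp ⟪(ω : Euc (m+2)), x⟫) ∂(sphμ (m+2)))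
      ≤ ∫⁻ ω, (∑' k : ℕ, Set.indicator (capSet m e (((k:ℝ)+1)/r))
            (fun _ => ENNReal.ofReal (Real.exp (r - (k:ℝ)))) ω) ∂(sphμ (m+2)) :=
        lintegral_mono hpt
    _ = ∑' k : ℕ, ∫⁻ ω, Set.indicator (capSet m e (((k:ℝ)+1)/r))
            (fun _ => ENNReal.ofReal (Real.exp (r - (k:ℝ)))) ω ∂(sphμ (m+2)) :=
        lintegral_tsum (fun k => (measurable_const.indicator (hcapmeas k)).aemeasurable)
    _ = ∑' k : ℕ, ENNReal.ofReal (Real.exp (r - (k:ℝ)))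
          * sphμ (m+2) (capSet m e (((k:ℝ)+1)/r)) := by
        congr 1
        funext k
        rw [lintegral_indicator_const (hcapmeas k)]
    _ ≤ ∑' k : ℕ, ENNReal.ofReal ((CUc m * (exp r * r ^ (-q)))
          * (Real.exp (-(k:ℝ)) * ((k:ℝ)+1) ^ q)) := by
        apply ENNReal.tsum_le_tsum
        intro k
        have hcap := cap_upper_all m e he (h := ((k:ℝ)+1)/r) (by positivity)
        calc ENNReal.ofReal (Real.exp (r - (k:ℝ))) * sphμ (m+2) (capSet m e (((k:ℝ)+1)/r))
            ≤ ENNReal.ofReal (Real.exp (r - (k:ℝ)))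
              * ENNReal.ofReal ((((m:ℝ) + 2) * (2:ℝ) ^ (((m:ℝ) + 1) / 2)
                  * (volume (closedBall (0 : Euc (m+1)) 1)).toReal
                + (sphμ (m + 2) Set.univ).toReal * (2:ℝ) ^ (((m:ℝ) + 1) / 2))
                * (((k:ℝ)+1)/r) ^ (((m:ℝ) + 1) / 2)) :=
              mul_le_mul_right hcap _
          _ = ENNReal.ofReal ((CUc m * (exp r * r ^ (-q)))
                * (Real.exp (-(k:ℝ)) * ((k:ℝ)+1) ^ q)) := by
              rw [← ENNReal.ofReal_mul (Real.exp_pos _).le]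
              congr 1
              have hCU : CUc m = ((m:ℝ) + 2) * (2:ℝ) ^ (((m:ℝ) + 1) / 2)
                  * (volume (closedBall (0 : Euc (m+1)) 1)).toReal
                + (sphμ (m + 2) Set.univ).toReal * (2:ℝ) ^ (((m:ℝ) + 1) / 2) := by
                unfold CUc KK qc
                ring
              rw [← hCU, hqdef]
              show Real.exp (r - (k:ℝ)) * (CUc m * (((k:ℝ)+1)/r) ^ (qc m)) = _
              rw [Real.div_rpow (by positivity) hr0.le, Real.rpow_neg hr0.le,
                Real.exp_sub, Real.exp_neg]
              have hrq : (0:ℝ) < r ^ (qc m) := Real.rpow_pos_of_pos hr0 _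
              have hek : (0:ℝ) < Real.exp (k:ℝ) := Real.exp_pos _
              field_simp
    _ = ENNReal.ofReal (CUc m * (exp r * r ^ (-q)))
          * ∑' k : ℕ, ENNReal.ofReal (Real.exp (-(k:ℝ)) * ((k:ℝ)+1) ^ q) := by
        rw [← ENNReal.tsum_mul_left]
        congr 1
        funext k
        rw [ENNReal.ofReal_mul]
        have h2q : (0:ℝ) < (2:ℝ) ^ q := Real.rpow_pos_of_pos (by norm_num) q
        have hrq : (0:ℝ) < r ^ (-q) := Real.rpow_pos_of_pos hr0 _
        have := CUc_pos m
        positivity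
    _ = ENNReal.ofReal ((CUc m * Smc m) * (exp r * r ^ (-q))) := by
        rw [← ENNReal.ofReal_tsum_of_nonneg (fun k => by positivity) (Smc_summable m)]
        rw [← ENNReal.ofReal_mul]
        · congr 1
          unfold Smc
          rw [hqdef]
          ring
        · have h2q : (0:ℝ) < r ^ (-q) := Real.rpow_pos_of_pos hr0 _
          have := CUc_pos m
          positivity

lemma G_lower (m : ℕ) (x : Euc (m+2)) (hr : 1 ≤ ‖x‖) :
    ENNReal.ofReal (Real.exp (‖x‖ - 1) * (cLc m * ((2 * ‖x‖)⁻¹) ^ (qc m)))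
      ≤ (∫⁻ ω : sphere (0 : Euc (m+2)) 1,
          ENNReal.ofReal (exp ⟪(ω : Euc (m+2)), x⟫) ∂(sphμ (m+2))) := by
  set r := ‖x‖ with hrdef
  have hr0 : (0:ℝ) < r := lt_of_lt_of_le one_pos hr
  have hx0 : x ≠ 0 := by
    intro h
    rw [h, norm_zero] at hrdef
    rw [← hrdef] at hr0
    exact lt_irrefl _ hr0
  set e : Euc (m+2) := ‖x‖⁻¹ • x with hedef
  have he : ‖e‖ = 1 := norm_smul_inv_norm hx0
  have hxe : ∀ ω : sphere (0 : Euc (m+2)) 1,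
      ⟪(ω : Euc (m+2)), x⟫ = r * ⟪e, (ω : Euc (m+2))⟫ := by
    intro ω
    rw [real_inner_comm]
    conv_lhs => rw [show x = r • e from (smul_inv_smul₀ (norm_ne_zero_iff.2 hx0) x).symm]
    rw [real_inner_smul_left]
  set h : ℝ := (2 * r)⁻¹ with hhdef
  have hh0 : 0 < h := by positivity
  have hh12 : h ≤ 1/2 := by
    rw [hhdef]
    rw [show (1/2 : ℝ) = (2 * 1)⁻¹ by norm_num]
    apply inv_anti₀ (by norm_num)
    linarith
  have hcap := cap_lower m e he hh0 hh12
  have hpt : ∀ ω : sphere (0 : Euc (m+2)) 1,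
      Set.indicator (capSet m e h) (fun _ => ENNReal.ofReal (Real.exp (r - 1))) ω
        ≤ ENNReal.ofReal (exp ⟪(ω : Euc (m+2)), x⟫) := by
    intro ω
    by_cases hω : ω ∈ capSet m e h
    · rw [Set.indicator_of_mem hω]
      apply ENNReal.ofReal_le_ofReal
      apply Real.exp_le_exp.2
      rw [hxe ω]
      have ht : 1 - h ≤ ⟪e, (ω : Euc (m+2))⟫ := hω
      have hrh : r * h = 1/2 := by
        rw [hhdef]
        field_simp
      nlinarith
    · rw [Set.indicator_of_notMem hω]
      exact zero_le
  calc ENNReal.ofReal (Real.exp (r - 1) * (cLc m * ((2 * r)⁻¹) ^ (qc m)))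
      = ENNReal.ofReal (Real.exp (r - 1)) * ENNReal.ofReal (cLc m * h ^ (qc m)) := by
        rw [← ENNReal.ofReal_mul (Real.exp_pos _).le, hhdef]
    _ ≤ ENNReal.ofReal (Real.exp (r - 1)) * sphμ (m+2) (capSet m e h) := by
        apply mul_le_mul_right
        refine le_trans (ENNReal.ofReal_le_ofReal ?_) hcap
        have h1 : cLc m * h ^ (qc m) = (((m:ℝ) + 2)
            * (volume (closedBall (0 : Euc (m+1)) 1)).toReal / 4 ^ (m + 3)) * h ^ (((m:ℝ)+1)/2) := by
          unfold cLc KK qc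
          ring
        rw [h1]
    _ = ∫⁻ ω, Set.indicator (capSet m e h)
          (fun _ => ENNReal.ofReal (Real.exp (r - 1))) ω ∂(sphμ (m+2)) := by
        rw [lintegral_indicator_const (capSet_meas m e h)]
    _ ≤ _ := lintegral_mono hpt


/-- For every `n ≥ 2` there are constants `c, C > 0` with
`c (1+|x|)^{-(n-1)/2} e^{|x|} ≤ ∫_{S^{n-1}} e^{ω·x} dσ(ω) ≤ C (1+|x|)^{-(n-1)/2} e^{|x|}`. -/
theorem sphF_growth (n : ℕ) (hn : 2 ≤ n) :
    ∃ c > (0 : ℝ), ∃ C > (0 : ℝ), ∀ x : Euc n,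
      c * (1 + ‖x‖) ^ (-(((n : ℝ) - 1) / 2)) * exp ‖x‖ ≤ sphF n x ∧
      sphF n x ≤ C * (1 + ‖x‖) ^ (-(((n : ℝ) - 1) / 2)) * exp ‖x‖ := by
  obtain ⟨m, rfl⟩ : ∃ m, n = m + 2 := ⟨n - 2, by omega⟩
  set q := qc m with hq
  have hq0 : 0 ≤ q := qc_nonneg m
  set T : ℝ := (sphμ (m+2) Set.univ).toReal with hT
  have hTpos : 0 < T := sph_univ_pos m
  have h2q : (0:ℝ) < (2:ℝ) ^ q := Real.rpow_pos_of_pos two_pos q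
  have h2nq : (0:ℝ) < (2:ℝ) ^ (-q) := Real.rpow_pos_of_pos two_pos _
  have hcL := cLc_pos m
  have hCU := CUc_pos m
  have hSm := Smc_pos m
  set c : ℝ := min (cLc m * Real.exp (-1) * (2:ℝ) ^ (-q)) (T * Real.exp (-2)) with hc
  set C : ℝ := max (T * (2:ℝ) ^ q) (CUc m * Smc m * (2:ℝ) ^ q) with hC
  have hcpos : 0 < c := lt_min (by positivity) (by positivity)
  have hCpos : 0 < C := lt_of_lt_of_le (by positivity) (le_max_left _ _)
  refine ⟨c, hcpos, C, hCpos, fun x => ?_⟩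
  have hexp : -((((m + 2 : ℕ) : ℝ) - 1) / 2) = -q := by
    rw [hq]
    unfold qc
    push_cast
    ring
  rw [hexp]
  set r := ‖x‖ with hr
  have hr0 : 0 ≤ r := norm_nonneg x
  have h1r : (0:ℝ) < 1 + r := by linarith
  have h1r1 : (1:ℝ) ≤ 1 + r := by linarith
  have hnegq : (0:ℝ) < (1 + r) ^ (-q) := Real.rpow_pos_of_pos h1r _
  set G := (∫⁻ ω : sphere (0 : Euc (m+2)) 1,
      ENNReal.ofReal (exp ⟪(ω : Euc (m+2)), x⟫) ∂(sphμ (m+2))) with hGdef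
  have hFeq : sphF (m+2) x = G.toReal := sphF_eq (m+2) x
  have hGle : G ≤ ENNReal.ofReal (exp r * T) := G_le_univ (m+2) x
  have hGne : G ≠ ∞ := (lt_of_le_of_lt hGle ENNReal.ofReal_lt_top).ne
  constructor
  · -- lower bound
    rcases le_or_gt r 1 with hrle | hrgt
    · have hpt : ∀ ω : sphere (0 : Euc (m+2)) 1,
          ENNReal.ofReal (Real.exp (-1)) ≤ ENNReal.ofReal (exp ⟪(ω : Euc (m+2)), x⟫) := by
        intro ω
        apply ENNReal.ofReal_le_ofReal
        apply Real.exp_le_exp.2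
        have h1 := abs_real_inner_le_norm (ω : Euc (m+2)) x
        have h2 : ‖(ω : Euc (m+2))‖ = 1 := mem_sphere_zero_iff_norm.mp ω.2
        rw [h2, one_mul] at h1
        have := neg_le_of_abs_le h1
        linarith
      have hGlow : ENNReal.ofReal (Real.exp (-1) * T) ≤ G := by
        calc ENNReal.ofReal (Real.exp (-1) * T)
            = ENNReal.ofReal (Real.exp (-1)) * sphμ (m+2) Set.univ := by
              rw [ENNReal.ofReal_mul (Real.exp_pos _).le, hT,
                ENNReal.ofReal_toReal (measure_ne_top _ _)]
          _ = ∫⁻ _ : sphere (0 : Euc (m+2)) 1,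
                ENNReal.ofReal (Real.exp (-1)) ∂(sphμ (m+2)) := (lintegral_const _).symm
          _ ≤ G := lintegral_mono hpt
      have hlow : Real.exp (-1) * T ≤ sphF (m+2) x := by
        rw [hFeq]
        exact (ENNReal.ofReal_le_iff_le_toReal hGne).1 hGlow
      have hle1 : (1 + r) ^ (-q) ≤ 1 :=
        Real.rpow_le_one_of_one_le_of_nonpos h1r1 (neg_nonpos.2 hq0)
      have e1 : c * (1 + r) ^ (-q) * exp r ≤ c * 1 * Real.exp 1 := by
        gcongr
      have e2 : c * 1 * Real.exp 1 ≤ (T * Real.exp (-2)) * Real.exp 1 := by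
        have := min_le_right (cLc m * Real.exp (-1) * (2:ℝ) ^ (-q)) (T * Real.exp (-2))
        rw [← hc] at this
        have h3 : (0:ℝ) < Real.exp 1 := Real.exp_pos _
        nlinarith
      have e3 : (T * Real.exp (-2)) * Real.exp 1 = Real.exp (-1) * T := by
        rw [mul_assoc, ← Real.exp_add]
        norm_num
        ring
      linarith
    · have hG1 := G_lower m x hrgt.le
      have hlow : Real.exp (r - 1) * (cLc m * ((2 * r)⁻¹) ^ q) ≤ sphF (m+2) x := by
        rw [hFeq]
        exact (ENNReal.ofReal_le_iff_le_toReal hGne).1 hG1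
      have haux : (2:ℝ) ^ (-q) * (1 + r) ^ (-q) ≤ ((2 * r)⁻¹) ^ q :=
        aux_rpow_lower hq0 hrgt.le
      have e1 : c * (1 + r) ^ (-q) * exp r
          ≤ (cLc m * Real.exp (-1) * (2:ℝ) ^ (-q)) * (1 + r) ^ (-q) * exp r := by
        have := min_le_left (cLc m * Real.exp (-1) * (2:ℝ) ^ (-q)) (T * Real.exp (-2))
        rw [← hc] at this
        gcongr
      have e2 : (cLc m * Real.exp (-1) * (2:ℝ) ^ (-q)) * (1 + r) ^ (-q) * exp r
          ≤ Real.exp (r - 1) * (cLc m * ((2 * r)⁻¹) ^ q) := by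
        have hexp2 : Real.exp (r - 1) = exp r * Real.exp (-1) := by
          rw [← Real.exp_add]
          ring_nf
        rw [hexp2]
        calc (cLc m * Real.exp (-1) * (2:ℝ) ^ (-q)) * (1 + r) ^ (-q) * exp r
            = (exp r * Real.exp (-1)) * (cLc m * ((2:ℝ) ^ (-q) * (1 + r) ^ (-q))) := by ring
          _ ≤ (exp r * Real.exp (-1)) * (cLc m * ((2 * r)⁻¹) ^ q) := by
              have h3 : (0:ℝ) < exp r * Real.exp (-1) := by positivity
              have h4 : 0 ≤ cLc m := hcL.le
              gcongr
        
      linarith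
  · -- upper bound
    rcases le_or_gt r 1 with hrle | hrgt
    · have hup : sphF (m+2) x ≤ exp r * T := by
        rw [hFeq]
        exact ENNReal.toReal_le_of_le_ofReal (by positivity) hGle
      have h1 : (1 + r) ^ q ≤ (2:ℝ) ^ q := Real.rpow_le_rpow h1r.le (by linarith) hq0
      have h2 : (2:ℝ) ^ (-q) ≤ (1 + r) ^ (-q) := by
        rw [Real.rpow_neg (by norm_num : (0:ℝ) ≤ 2), Real.rpow_neg h1r.le]
        exact inv_anti₀ (Real.rpow_pos_of_pos h1r q) h1
      have h3 : T ≤ C * (1 + r) ^ (-q) := by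
        have e0 : T = (T * (2:ℝ) ^ q) * (2:ℝ) ^ (-q) := by
          rw [mul_assoc, ← Real.rpow_add two_pos]
          simp
        calc T = (T * (2:ℝ) ^ q) * (2:ℝ) ^ (-q) := e0
          _ ≤ C * (2:ℝ) ^ (-q) := by
              have := le_max_left (T * (2:ℝ) ^ q) (CUc m * Smc m * (2:ℝ) ^ q)
              rw [← hC] at this
              gcongr
          _ ≤ C * (1 + r) ^ (-q) := by gcongr
      calc sphF (m+2) x ≤ exp r * T := hup
        _ ≤ exp r * (C * (1 + r) ^ (-q)) := by
            gcongr
        _ = C * (1 + r) ^ (-q) * exp r := by ring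
    · have hup' := G_upper m x hrgt.le
      have hup : sphF (m+2) x ≤ (CUc m * Smc m) * (exp r * r ^ (-q)) := by
        rw [hFeq]
        apply ENNReal.toReal_le_of_le_ofReal ?_ hup'
        have hrq : (0:ℝ) < r ^ (-q) := Real.rpow_pos_of_pos (by linarith) _
        positivity
      have haux : r ^ (-q) ≤ (2:ℝ) ^ q * (1 + r) ^ (-q) := aux_rpow_upper hq0 hrgt.le
      calc sphF (m+2) x ≤ (CUc m * Smc m) * (exp r * r ^ (-q)) := hup
        _ ≤ (CUc m * Smc m) * (exp r * ((2:ℝ) ^ q * (1 + r) ^ (-q))) := by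
            have h5 : (0:ℝ) ≤ CUc m * Smc m := by positivity
            gcongr
        _ = (CUc m * Smc m * (2:ℝ) ^ q) * (1 + r) ^ (-q) * exp r := by ring
        _ ≤ C * (1 + r) ^ (-q) * exp r := by
            have := le_max_right (T * (2:ℝ) ^ q) (CUc m * Smc m * (2:ℝ) ^ q)
            rw [← hC] at this
            gcongr

end
end

section
/- Let n ∈ {1,2,3}, R₀ > 0 and C > 0. There is no twice continuously differentiable function X : [0,∞) → ℝ satisfying X''(t) ≥ C X(t)² / (e^t (t+R₀)^{(n-1)/2}) + X(t) for all t ≥ 0 together with X(0) + X'(0) > 0. Equivalently, every C² solution of this differential inequality with X(0) + X'(0) > 0 blows up in finite time. -/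
open Real Set
open scoped ENNReal

noncomputable section

/-- monotone on Ici from pointwise derivative on the interior -/
lemma monoIci {f f' : ℝ → ℝ} {a : ℝ} (hc : ContinuousOn f (Ici a))
    (hd : ∀ t, a < t → HasDerivAt f (f' t) t)
    (h0 : ∀ t, a < t → 0 ≤ f' t) : MonotoneOn f (Ici a) := by
  apply monotoneOn_of_deriv_nonneg (convex_Ici a) hc
  · intro t ht
    rw [interior_Ici] at ht
    exact ((hd t ht).differentiableAt).differentiableWithinAt
  · intro t ht
    rw [interior_Ici] at ht
    rw [(hd t ht).deriv]
    exact h0 t ht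

lemma monoIcc {f f' : ℝ → ℝ} {a b : ℝ} (hc : ContinuousOn f (Icc a b))
    (hd : ∀ t, a < t → t < b → HasDerivAt f (f' t) t)
    (h0 : ∀ t, a < t → t < b → 0 ≤ f' t) : MonotoneOn f (Icc a b) := by
  apply monotoneOn_of_deriv_nonneg (convex_Icc a b) hc
  · intro t ht
    rw [interior_Icc] at ht
    exact ((hd t ht.1 ht.2).differentiableAt).differentiableWithinAt
  · intro t ht
    rw [interior_Icc] at ht
    rw [(hd t ht.1 ht.2).deriv]
    exact h0 t ht.1 ht.2

lemma exp_neg_two_mul_le {δ : ℝ} (h0 : 0 ≤ δ) (h1 : δ ≤ 1) :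
    Real.exp (-2 * δ) ≤ 1 - 2 * δ / 3 := by
  have hconv := convexOn_exp.2 (Set.mem_univ (0:ℝ)) (Set.mem_univ (-2:ℝ))
    (by linarith : (0:ℝ) ≤ 1 - δ) h0 (by ring)
  have h2 : Real.exp (-2:ℝ) ≤ 1/3 := by
    have h3 : (3:ℝ) ≤ Real.exp 2 := by
      have := Real.add_one_le_exp (2:ℝ); linarith
    rw [Real.exp_neg]
    calc (Real.exp 2)⁻¹ ≤ 3⁻¹ := by
          apply inv_anti₀ (by norm_num) h3
      _ = 1/3 := by norm_num
  have h4 : (1 - δ) • Real.exp 0 + δ • Real.exp (-2) ≤ 1 - 2*δ/3 := by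
    simp only [smul_eq_mul, Real.exp_zero]
    nlinarith
  calc Real.exp (-2*δ) = Real.exp ((1-δ) • (0:ℝ) + δ • (-2:ℝ)) := by
        simp only [smul_eq_mul]; ring_nf
    _ ≤ (1 - δ) • Real.exp 0 + δ • Real.exp (-2) := hconv
    _ ≤ 1 - 2*δ/3 := h4

set_option maxHeartbeats 4000000 in
/-- Let `n ∈ {1,2,3}`, `R₀ > 0`, `C > 0`.  There is no `C²` function `X : [0,∞) → ℝ` with
`X(0) + X'(0) > 0` satisfying `X'' ≥ C X² / (eᵗ (t+R₀)^{(n-1)/2}) + X` on `[0,∞)`;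
i.e. every such solution of the differential inequality blows up in finite time. -/
theorem ode_blowup_no_global_solution
    (n : ℕ) (hn : n = 1 ∨ n = 2 ∨ n = 3) (R₀ C : ℝ) (hR₀ : 0 < R₀) (hC : 0 < C) :
    ¬ ∃ X : ℝ → ℝ,
        ContDiffOn ℝ 2 X (Ici 0) ∧
        (∀ t ∈ Ici (0 : ℝ),
          derivWithin (derivWithin X (Ici 0)) (Ici 0) t ≥
            C * X t ^ 2 / (exp t * (t + R₀) ^ (((n : ℝ) - 1) / 2)) + X t) ∧
        0 < X 0 + derivWithin X (Ici 0) 0 := by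
  rintro ⟨X, hX2, hineq, hpos⟩
  set α : ℝ := ((n : ℝ) - 1) / 2 with hαdef
  have hα0 : 0 ≤ α := by rcases hn with h|h|h <;> simp [hαdef, h] <;> norm_num
  have hα1 : α ≤ 1 := by rcases hn with h|h|h <;> simp [hαdef, h] <;> norm_num
  set D1 := derivWithin X (Ici (0:ℝ)) with hD1def
  set D2 := derivWithin D1 (Ici (0:ℝ)) with hD2def
  -- basic calculus facts
  have hXd : DifferentiableOn ℝ X (Ici 0) := hX2.differentiableOn (by norm_num)
  have hD1cd : ContDiffOn ℝ 1 D1 (Ici 0) :=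
    hX2.derivWithin (uniqueDiffOn_Ici 0) (by norm_num)
  have hD1d : DifferentiableOn ℝ D1 (Ici 0) := hD1cd.differentiableOn (by norm_num)
  have hXat : ∀ t : ℝ, 0 < t → HasDerivAt X (D1 t) t := by
    intro t ht
    have h1 : Ici (0:ℝ) ∈ nhds t := Ici_mem_nhds ht
    have h2 := (hXd t ht.le).differentiableAt h1
    rw [hD1def, derivWithin_of_mem_nhds h1]
    exact h2.hasDerivAt
  have hD1at : ∀ t : ℝ, 0 < t → HasDerivAt D1 (D2 t) t := by
    intro t ht
    have h1 : Ici (0:ℝ) ∈ nhds t := Ici_mem_nhds ht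
    have h2 := (hD1d t ht.le).differentiableAt h1
    rw [hD2def, derivWithin_of_mem_nhds h1]
    exact h2.hasDerivAt
  set u : ℝ → ℝ := fun t => (X t + D1 t) * Real.exp (-t) with hudef
  set v : ℝ → ℝ := fun t => X t * Real.exp (-t) with hvdef
  have hexpc : Continuous fun t : ℝ => Real.exp (-t) := by continuity
  have huc : ContinuousOn u (Ici 0) :=
    ((hXd.continuousOn.add hD1d.continuousOn).mul hexpc.continuousOn)
  have hvc : ContinuousOn v (Ici 0) := hXd.continuousOn.mul hexpc.continuousOn
  have hexpat : ∀ t : ℝ, HasDerivAt (fun s => Real.exp (-s)) (-Real.exp (-t)) t := by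
    intro t
    have := ((hasDerivAt_id t).neg).exp
    simpa using this
  have huat : ∀ t : ℝ, 0 < t → HasDerivAt u ((D2 t - X t) * Real.exp (-t)) t := by
    intro t ht
    have h := ((hXat t ht).add (hD1at t ht)).mul (hexpat t)
    exact h.congr_deriv (by simp only [Pi.add_apply]; ring)
  have hvat : ∀ t : ℝ, 0 < t → HasDerivAt v (u t - 2 * v t) t := by
    intro t ht
    have h := (hXat t ht).mul (hexpat t)
    exact h.congr_deriv (by simp only [hudef, hvdef]; ring)
  set Y0 : ℝ := X 0 + D1 0 with hY0def
  have hY0 : 0 < Y0 := hpos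
  have hu0 : u 0 = Y0 := by simp [hudef, hY0def]
  -- lower bound on the derivative of u
  have hP : ∀ t : ℝ, 0 ≤ t → 0 < (t + R₀) ^ α := by
    intro t ht; exact Real.rpow_pos_of_pos (by linarith) α
  have hudv : ∀ t : ℝ, 0 < t →
      C * v t ^ 2 / ((t + R₀) ^ α) ≤ (D2 t - X t) * Real.exp (-t) := by
    intro t ht
    have h1 := hineq t (le_of_lt ht)
    have hPt := hP t ht.le
    have hexp := Real.exp_pos t
    have h2 : C * X t ^ 2 / (Real.exp t * (t + R₀) ^ α) ≤ D2 t - X t := by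
      rw [ge_iff_le] at h1
      linarith
    have h3 : C * v t ^ 2 / ((t + R₀) ^ α) =
        (C * X t ^ 2 / (Real.exp t * (t + R₀) ^ α)) * Real.exp (-t) := by
      simp only [hvdef, Real.exp_neg]
      field_simp
    rw [h3]
    apply mul_le_mul_of_nonneg_right h2 (Real.exp_pos (-t)).le
  have hudv0 : ∀ t : ℝ, 0 < t → 0 ≤ (D2 t - X t) * Real.exp (-t) := by
    intro t ht
    refine le_trans ?_ (hudv t ht)
    positivity
  -- u is monotone
  have humono : MonotoneOn u (Ici 0) :=
    monoIci huc (fun t ht => huat t ht) (fun t ht => hudv0 t ht)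
  have huY0 : ∀ t : ℝ, 0 ≤ t → Y0 ≤ u t := by
    intro t ht
    rw [← hu0]
    exact humono (self_mem_Ici) ht ht
  have hupos : ∀ t : ℝ, 0 ≤ t → 0 < u t := fun t ht => lt_of_lt_of_le hY0 (huY0 t ht)
  -- the key comparison lemma
  have hKey : ∀ s t : ℝ, 0 ≤ s → s ≤ t →
      u s / 2 + (v s - u s / 2) * Real.exp (-2 * (t - s)) ≤ v t := by
    intro s t hs hst
    have hmono : MonotoneOn (fun r => (v r - u s / 2) * Real.exp (2 * r)) (Ici s) := by
      apply monoIci (f' := fun r => (u r - u s) * Real.exp (2 * r))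
      · apply ContinuousOn.mul
        · exact (hvc.mono (Ici_subset_Ici.mpr hs)).sub continuousOn_const
        · exact (Real.continuous_exp.comp (continuous_const.mul continuous_id)).continuousOn
      · intro r hr
        have hr0 : 0 < r := lt_of_le_of_lt hs hr
        have hE : HasDerivAt (fun r : ℝ => Real.exp (2 * r)) (Real.exp (2 * r) * 2) r := by
          simpa using (((hasDerivAt_id r).const_mul (2:ℝ)).exp)
        have h1 := ((hvat r hr0).sub_const (u s / 2)).mul hE
        exact h1.congr_deriv (by ring)
      · intro r hr
        have hr0 : 0 < r := lt_of_le_of_lt hs hr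
        have := humono (show s ∈ Ici (0:ℝ) from hs) (show r ∈ Ici (0:ℝ) from hr0.le) hr.le
        have := Real.exp_pos (2 * r)
        nlinarith
    have h2 := hmono (self_mem_Ici) (show t ∈ Ici s from hst) hst
    simp only at h2
    have h3 := mul_le_mul_of_nonneg_right h2 (Real.exp_pos (-2 * t)).le
    have e1 : Real.exp (2 * s) * Real.exp (-2 * t) = Real.exp (-2 * (t - s)) := by
      rw [← Real.exp_add]; ring_nf
    have e2 : Real.exp (2 * t) * Real.exp (-2 * t) = 1 := by
      rw [← Real.exp_add]; ring_nf; exact Real.exp_zero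
    have h4 : (v s - u s / 2) * Real.exp (-2 * (t - s)) ≤ v t - u s / 2 := by
      calc (v s - u s / 2) * Real.exp (-2 * (t - s))
          = (v s - u s / 2) * Real.exp (2 * s) * Real.exp (-2 * t) := by rw [mul_assoc, e1]
        _ ≤ (v t - u s / 2) * Real.exp (2 * t) * Real.exp (-2 * t) := h3
        _ = v t - u s / 2 := by rw [mul_assoc, e2, mul_one]
    linarith
  -- v(0) = X(0)
  have hv0 : v 0 = X 0 := by simp [hvdef]
  -- choice of T₀ : beyond it, v ≥ Y0/4
  set W : ℝ := |X 0| + Y0 with hWdef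
  have hW : 0 < W := by positivity
  set T₀ : ℝ := max 1 (Real.log (4 * W / Y0)) with hT₀def
  have hT₀1 : 1 ≤ T₀ := le_max_left _ _
  have hT₀0 : 0 < T₀ := lt_of_lt_of_le one_pos hT₀1
  have hT₀ : ∀ t : ℝ, T₀ ≤ t → Y0 / 4 ≤ v t := by
    intro t ht
    have ht0 : (0:ℝ) ≤ t := le_trans hT₀0.le ht
    have hk := hKey 0 t le_rfl ht0
    rw [hu0, hv0] at hk
    have hE : Real.exp (-2 * (t - 0)) ≤ Y0 / (4 * W) := by
      have h1 : -2 * (t - 0) ≤ -T₀ := by linarith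
      have h2 : Real.exp (-2 * (t - 0)) ≤ Real.exp (-T₀) := Real.exp_le_exp.mpr h1
      have h3 : Real.exp (-T₀) ≤ Real.exp (-(Real.log (4 * W / Y0))) := by
        apply Real.exp_le_exp.mpr
        have := le_max_right 1 (Real.log (4 * W / Y0))
        linarith [hT₀def ▸ this]
      have h4 : Real.exp (-(Real.log (4 * W / Y0))) = Y0 / (4 * W) := by
        rw [Real.exp_neg, Real.exp_log (by positivity)]
        field_simp
      linarith
    have hE0 : 0 < Real.exp (-2 * (t - 0)) := Real.exp_pos _
    have habs : |X 0 - Y0 / 2| ≤ W := by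
      rw [hWdef]
      have := abs_sub (X 0) (Y0 / 2)
      have h5 : |Y0 / 2| ≤ Y0 := by rw [abs_of_nonneg (by linarith)]; linarith
      calc |X 0 - Y0 / 2| ≤ |X 0| + |Y0 / 2| := abs_sub _ _
        _ ≤ |X 0| + Y0 := by linarith
    have hlow : -(W * (Y0 / (4 * W))) ≤ (X 0 - Y0 / 2) * Real.exp (-2 * (t - 0)) := by
      have h6 : -(W) ≤ X 0 - Y0 / 2 := by
        have := neg_abs_le (X 0 - Y0 / 2); linarith
      have h7 : W * Real.exp (-2 * (t - 0)) ≤ W * (Y0 / (4 * W)) :=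
        mul_le_mul_of_nonneg_left hE hW.le
      calc -(W * (Y0 / (4 * W))) ≤ -(W * Real.exp (-2 * (t - 0))) := by linarith
        _ = (-W) * Real.exp (-2 * (t - 0)) := by ring
        _ ≤ (X 0 - Y0 / 2) * Real.exp (-2 * (t - 0)) := by
            apply mul_le_mul_of_nonneg_right h6 hE0.le
    have hWY : W * (Y0 / (4 * W)) = Y0 / 4 := by
      field_simp
    rw [hWY] at hlow
    linarith
  -- the delayed lower bound for v in terms of u
  have hG3 : ∀ s t : ℝ, T₀ ≤ s → s ≤ t → t ≤ s + 1 → u s * (t - s) / 3 ≤ v t := by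
    intro s t hs hst ht1
    have hs0 : (0:ℝ) ≤ s := le_trans hT₀0.le hs
    have hk := hKey s t hs0 hst
    have hE1 : Real.exp (-2 * (t - s)) ≤ 1 - 2 * (t - s) / 3 :=
      exp_neg_two_mul_le (by linarith) (by linarith)
    have hE0 : 0 ≤ Real.exp (-2 * (t - s)) := (Real.exp_pos _).le
    have hvs : Y0 / 4 ≤ v s := hT₀ s hs
    have hus : 0 < u s := hupos s hs0
    set E : ℝ := Real.exp (-2 * (t - s)) with hEdef
    have h1 : 0 ≤ v s * E := mul_nonneg (by linarith) hE0
    have h2 : u s / 2 * E ≤ u s / 2 * (1 - 2 * (t - s) / 3) :=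
      mul_le_mul_of_nonneg_left hE1 (by positivity)
    have h3 : (v s - u s / 2) * E = v s * E - u s / 2 * E := by ring
    rw [h3] at hk
    nlinarith [hk, h1, h2]
  -- stronger derivative bound for t ≥ 1
  have hudv1 : ∀ t : ℝ, 1 ≤ t → C * v t ^ 2 / (t + R₀) ≤ (D2 t - X t) * Real.exp (-t) := by
    intro t ht
    have ht0 : (0:ℝ) < t := lt_of_lt_of_le one_pos ht
    refine le_trans ?_ (hudv t ht0)
    have hb : (1:ℝ) ≤ t + R₀ := by linarith
    have hτ : (t + R₀) ^ α ≤ t + R₀ := by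
      have := Real.rpow_le_rpow_of_exponent_le hb hα1
      rwa [Real.rpow_one] at this
    apply div_le_div_of_nonneg_left (by positivity) (hP t ht0.le) hτ
  -- u reaches any level
  have hreach : ∀ A : ℝ, ∃ S : ℝ, max (max T₀ R₀) 2 ≤ S ∧ A ≤ u S := by
    intro A
    set c : ℝ := C * Y0 ^ 2 / 16 with hcdef
    have hc : 0 < c := by positivity
    have hmono : MonotoneOn (fun t => u t - c * Real.log (t + R₀)) (Ici T₀) := by
      apply monoIci (f' := fun t => (D2 t - X t) * Real.exp (-t) - c * (1 / (t + R₀)))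
      · apply (huc.mono (Ici_subset_Ici.mpr hT₀0.le)).sub
        apply ContinuousOn.mul continuousOn_const
        apply ContinuousOn.log ((continuous_id.add continuous_const).continuousOn)
        intro x hx
        have hx' : T₀ ≤ x := hx
        have : (0:ℝ) < x + R₀ := by linarith
        exact ne_of_gt this
      · intro t ht
        have ht0 : 0 < t := lt_trans hT₀0 ht
        have htR : t + R₀ ≠ 0 := by positivity
        have hL : HasDerivAt (fun y : ℝ => Real.log (y + R₀)) (1 / (t + R₀)) t := by
          have h1 := ((hasDerivAt_id t).add_const R₀).log htR
          simpa using h1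
        exact (huat t ht0).sub (hL.const_mul c)
      · intro t ht
        have ht1 : 1 ≤ t := le_trans hT₀1 (le_of_lt ht)
        have ht0 : 0 < t := lt_of_lt_of_le one_pos ht1
        have hv4 : Y0 / 4 ≤ v t := hT₀ t (le_of_lt ht)
        have h1 := hudv1 t ht1
        have h2 : c * (1 / (t + R₀)) ≤ C * v t ^ 2 / (t + R₀) := by
          rw [hcdef]
          rw [mul_one_div, div_le_div_iff₀ (by linarith) (by linarith)]
          have hv2 : Y0 ^ 2 / 16 ≤ v t ^ 2 := by nlinarith [hv4, hY0]
          have hmul := mul_le_mul_of_nonneg_left hv2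
            (show (0:ℝ) ≤ C * (t + R₀) by positivity)
          nlinarith [hmul]
        linarith
    set L : ℝ := (A - u T₀) / c + Real.log (T₀ + R₀) with hLdef
    refine ⟨max (max (max T₀ R₀) 2) (Real.exp L), le_max_left _ _, ?_⟩
    set S := max (max (max T₀ R₀) 2) (Real.exp L) with hSdef
    have hST₀ : T₀ ≤ S :=
      le_trans (le_max_left _ _) (le_trans (le_max_left _ _) (le_max_left _ _))
    have hSL : Real.exp L ≤ S := le_max_right _ _
    have hlog : L ≤ Real.log (S + R₀) := by
      have h1 : Real.exp L ≤ S + R₀ := by linarith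
      have h2 := Real.log_le_log (Real.exp_pos L) h1
      rwa [Real.log_exp] at h2
    have h3 := hmono (self_mem_Ici) (show S ∈ Ici T₀ from hST₀) hST₀
    simp only at h3
    have h4 : c * L ≤ c * Real.log (S + R₀) := mul_le_mul_of_nonneg_left hlog hc.le
    have h5 : c * L = (A - u T₀) + c * Real.log (T₀ + R₀) := by
      rw [hLdef]; field_simp
    nlinarith
  -- doubling estimate
  have hdouble : ∀ s : ℝ, T₀ ≤ s → R₀ ≤ s → 2 ≤ s →
      u s + C * u s ^ 2 / 54 ≤ u (2 * s) := by
    intro s hsT₀ hsR₀ hs2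
    have hs0 : (0:ℝ) < s := by linarith
    set g : ℝ := C * u s ^ 2 / (27 * s) with hgdef
    have hus : 0 < u s := hupos s hs0.le
    have hg0 : 0 < g := by rw [hgdef]; positivity
    have hmono : MonotoneOn (fun t => u t - g * t) (Icc (s + 1) (2 * s)) := by
      apply monoIcc (f' := fun t => (D2 t - X t) * Real.exp (-t) - g)
      · apply ContinuousOn.sub
        · apply huc.mono
          intro x hx
          have := hx.1
          simp only [mem_Ici]
          linarith [hx.1]
        · exact (continuous_const.mul continuous_id).continuousOn
      · intro t ht1 ht2
        have ht0 : 0 < t := by linarith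
        have hgd : HasDerivAt (fun y : ℝ => g * y) g t := by
          simpa using (hasDerivAt_id t).const_mul g
        exact (huat t ht0).sub hgd
      · intro t ht1 ht2
        have htp : (1:ℝ) ≤ t := by linarith
        have h1 := hudv1 t htp
        have hG := hG3 (t - 1) t (by linarith) (by linarith) (by linarith)
        have he : t - (t - 1) = 1 := by ring
        rw [he] at hG
        have h2 : u s ≤ u (t - 1) := humono (by simp only [mem_Ici]; linarith)
          (by simp only [mem_Ici]; linarith) (by linarith)
        have hv3 : u s / 3 ≤ v t := by nlinarith
        have hτ3 : t + R₀ ≤ 3 * s := by linarith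
        have h3 : g ≤ C * v t ^ 2 / (t + R₀) := by
          rw [hgdef, div_le_div_iff₀ (by positivity) (by linarith)]
          have h9 : u s ^ 2 ≤ 9 * v t ^ 2 := by
            nlinarith [mul_le_mul hv3 hv3 (by positivity) (by linarith : (0:ℝ) ≤ v t)]
          have hA := mul_le_mul_of_nonneg_left h9
            (show (0:ℝ) ≤ C * (t + R₀) by positivity)
          have hB := mul_le_mul_of_nonneg_left hτ3
            (show (0:ℝ) ≤ 9 * C * v t ^ 2 by positivity)
          nlinarith [hA, hB]
        linarith
    have hend := hmono (show s + 1 ∈ Icc (s+1) (2*s) by constructor <;> [linarith; linarith])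
      (show 2 * s ∈ Icc (s+1) (2*s) by constructor <;> [linarith; linarith]) (by linarith)
    simp only at hend
    have h6 : u s ≤ u (s + 1) := humono (by simp only [mem_Ici]; linarith)
      (by simp only [mem_Ici]; linarith) (by linarith)
    have h7 : g * s = C * u s ^ 2 / 27 := by
      rw [hgdef]; field_simp
    nlinarith
  -- Phase 1 : quadratic growth along a dyadic sequence
  set A : ℝ := 216 / C with hAdef
  have hA : 0 < A := by positivity
  have hCA : C * A = 216 := by rw [hAdef]; field_simp
  obtain ⟨S₂, hS₂a, hS₂b⟩ := hreach A
  have hS₂T₀ : T₀ ≤ S₂ := le_trans (le_trans (le_max_left _ _) (le_max_left _ _)) hS₂a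
  have hS₂R₀ : R₀ ≤ S₂ := le_trans (le_trans (le_max_right _ _) (le_max_left _ _)) hS₂a
  have hS₂2 : (2:ℝ) ≤ S₂ := le_trans (le_max_right _ _) hS₂a
  have hS₂0 : (0:ℝ) < S₂ := by linarith
  have hphase1 : ∀ m : ℕ, 4 ^ m * A ≤ u (2 ^ m * S₂) := by
    intro m
    induction m with
    | zero => simpa using hS₂b
    | succ m ih =>
      set s : ℝ := 2 ^ m * S₂ with hsdef
      have h2m : (1:ℝ) ≤ 2 ^ m := one_le_pow₀ (by norm_num)
      have hsS₂ : S₂ ≤ s := by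
        rw [hsdef]
        calc S₂ = 1 * S₂ := by ring
          _ ≤ 2 ^ m * S₂ := mul_le_mul_of_nonneg_right h2m hS₂0.le
      have hs0 : (0:ℝ) < s := by linarith
      have hd := hdouble s (le_trans hS₂T₀ hsS₂) (le_trans hS₂R₀ hsS₂) (le_trans hS₂2 hsS₂)
      have hus : 4 ^ m * A ≤ u s := ih
      have h4m : (1:ℝ) ≤ 4 ^ m := one_le_pow₀ (by norm_num)
      have hus0 : (0:ℝ) ≤ u s := (hupos s hs0.le).le
      have husq : (4 ^ m * A) ^ 2 ≤ u s ^ 2 := by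
        apply pow_le_pow_left₀ (by positivity) hus
      have hstep : 4 ^ (m + 1) * A ≤ u s + C * u s ^ 2 / 54 := by
        have hh : C * (4 ^ m * A) ^ 2 / 54 ≤ C * u s ^ 2 / 54 := by
          apply div_le_div_of_nonneg_right ?_ (by norm_num)
          exact mul_le_mul_of_nonneg_left husq hC.le
        have hval : C * (4 ^ m * A) ^ 2 / 54 = 4 * ((4:ℝ) ^ m * 4 ^ m) * A := by
          have he2 : C * (4 ^ m * A) ^ 2 / 54 = (C * A) * (4 ^ m * 4 ^ m) * A / 54 := by ring
          rw [he2, hCA]; ring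
        have h44 : (4:ℝ) ^ m ≤ 4 ^ m * 4 ^ m := by
          nlinarith [mul_le_mul_of_nonneg_left h4m (show (0:ℝ) ≤ 4 ^ m by positivity)]
        have h45 : 4 * ((4:ℝ) ^ m) * A ≤ 4 * ((4:ℝ) ^ m * 4 ^ m) * A := by nlinarith
        calc (4:ℝ) ^ (m + 1) * A = 4 * (4:ℝ) ^ m * A := by ring
          _ ≤ 4 * ((4:ℝ) ^ m * 4 ^ m) * A := h45
          _ = C * (4 ^ m * A) ^ 2 / 54 := hval.symm
          _ ≤ C * u s ^ 2 / 54 := hh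
          _ ≤ u s + C * u s ^ 2 / 54 := by linarith
      have he : (2:ℝ) ^ (m + 1) * S₂ = 2 * s := by rw [hsdef]; ring
      rw [he]
      linarith
  -- choose the window start T₁
  obtain ⟨m, hm⟩ := pow_unbounded_of_one_lt (4032 * (2 + R₀) * S₂ / (C * A)) (by norm_num : (1:ℝ) < 2)
  obtain ⟨T₁, hT₁def⟩ : ∃ T₁ : ℝ, T₁ = 2 ^ m * S₂ := ⟨_, rfl⟩
  have h2m : (1:ℝ) ≤ 2 ^ m := one_le_pow₀ (by norm_num)
  have h2m0 : (0:ℝ) < 2 ^ m := by positivity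
  have hT₁S₂ : S₂ ≤ T₁ := by
    rw [hT₁def]
    calc S₂ = 1 * S₂ := by ring
      _ ≤ 2 ^ m * S₂ := mul_le_mul_of_nonneg_right h2m hS₂0.le
  have hT₁2 : (2:ℝ) ≤ T₁ := le_trans hS₂2 hT₁S₂
  have hT₁T₀ : T₀ ≤ T₁ := le_trans hS₂T₀ hT₁S₂
  have hT₁R₀ : R₀ ≤ T₁ := le_trans hS₂R₀ hT₁S₂
  have hT₁0 : (0:ℝ) < T₁ := by linarith
  obtain ⟨β, hβdef⟩ : ∃ β : ℝ, β = 9 * (T₁ + 1 + R₀) := ⟨_, rfl⟩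
  have hβ : 0 < β := by rw [hβdef]; positivity
  obtain ⟨N, hNdef⟩ : ∃ N : ℝ, N = 448 * β / C := ⟨_, rfl⟩
  have hN : 0 < N := by rw [hNdef]; positivity
  have hbase : N ≤ u T₁ := by
    have h1 : 4 ^ m * A ≤ u T₁ := by rw [hT₁def]; exact hphase1 m
    have hm' : 4032 * (2 + R₀) * S₂ < 2 ^ m * (C * A) := by
      have hCA0 : 0 < C * A := by positivity
      exact (div_lt_iff₀ hCA0).mp hm
    have h4eq : (4:ℝ) ^ m = 2 ^ m * 2 ^ m := by
      rw [← mul_pow]; norm_num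
    have hβT₁ : β ≤ 9 * ((2 + R₀) * T₁) := by
      rw [hβdef]
      have h00 : R₀ * 1 ≤ R₀ * T₁ :=
        mul_le_mul_of_nonneg_left (by linarith) hR₀.le
      have : T₁ + 1 + R₀ ≤ (2 + R₀) * T₁ := by nlinarith [h00]
      linarith
    -- N = 448*β/C ≤ 448*9*(2+R₀)*T₁/C and 4^m*A*C = 2^m*(2^m*(C*A)) > 2^m*4032*(2+R₀)*S₂
    rw [hNdef, div_le_iff₀ hC]
    have h2 : 4 ^ m * A * C = 2 ^ m * (2 ^ m * (C * A)) := by rw [h4eq]; ring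
    have h3 : 2 ^ m * (4032 * (2 + R₀) * S₂) ≤ 2 ^ m * (2 ^ m * (C * A)) := by
      apply mul_le_mul_of_nonneg_left (le_of_lt hm') h2m0.le
    have h4 : 2 ^ m * (4032 * (2 + R₀) * S₂) = 4032 * (2 + R₀) * T₁ := by
      rw [hT₁def]; ring
    have h5 : 448 * β ≤ 4032 * (2 + R₀) * T₁ := by linarith
    have h6 : 4 ^ m * A * C ≤ u T₁ * C := mul_le_mul_of_nonneg_right h1 hC.le
    linarith
  -- the gain lemma on the unit window [T₁, T₁+1]
  have hGain : ∀ s Δ : ℝ, T₁ ≤ s → 0 < Δ → Δ ≤ 1/2 → s + 2 * Δ ≤ T₁ + 1 →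
      u s + C / β * Δ ^ 3 * u s ^ 2 ≤ u (s + 2 * Δ) := by
    intro s Δ hsT₁ hΔ0 hΔh hwin
    have hs0 : (0:ℝ) < s := lt_of_lt_of_le hT₁0 hsT₁
    have hus : 0 < u s := hupos s hs0.le
    set g : ℝ := C / β * Δ ^ 2 * u s ^ 2 with hgdef
    have hg0 : 0 < g := by rw [hgdef]; positivity
    have hmono : MonotoneOn (fun t => u t - g * t) (Icc (s + Δ) (s + 2 * Δ)) := by
      apply monoIcc (f' := fun t => (D2 t - X t) * Real.exp (-t) - g)
      · apply ContinuousOn.sub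
        · apply huc.mono
          intro x hx
          simp only [mem_Ici]
          have := hx.1
          linarith
        · exact (continuous_const.mul continuous_id).continuousOn
      · intro t ht1 ht2
        have ht0 : 0 < t := by linarith
        have hgd : HasDerivAt (fun y : ℝ => g * y) g t := by
          simpa using (hasDerivAt_id t).const_mul g
        exact (huat t ht0).sub hgd
      · intro t ht1 ht2
        have htp : (1:ℝ) ≤ t := by linarith [hT₁2]
        have h1 := hudv1 t htp
        have hG := hG3 (t - Δ) t (by linarith [hT₁T₀]) (by linarith) (by linarith)
        have he : t - (t - Δ) = Δ := by ring
        rw [he] at hG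
        have h2 : u s ≤ u (t - Δ) := humono (by simp only [mem_Ici]; linarith)
          (by simp only [mem_Ici]; linarith) (by linarith)
        have hv3 : u s * Δ / 3 ≤ v t := by
          have hm2 : u s * Δ ≤ u (t - Δ) * Δ := mul_le_mul_of_nonneg_right h2 hΔ0.le
          linarith [hm2, hG]
        have hτβ : t + R₀ ≤ T₁ + 1 + R₀ := by linarith
        have h3 : g ≤ C * v t ^ 2 / (t + R₀) := by
          rw [hgdef]
          have hgeq : C / β * Δ ^ 2 * u s ^ 2 = C * (Δ ^ 2 * u s ^ 2) / β := by ring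
          rw [hgeq, div_le_div_iff₀ hβ (by linarith)]
          have hvt0' : (0:ℝ) ≤ v t := le_trans (by positivity) hv3
          have h99 : (u s * Δ / 3) * (u s * Δ / 3) ≤ v t * v t :=
            mul_le_mul hv3 hv3 (by positivity) hvt0'
          have h9' : Δ ^ 2 * u s ^ 2 ≤ 9 * v t ^ 2 := by
            calc Δ ^ 2 * u s ^ 2 = 9 * ((u s * Δ / 3) * (u s * Δ / 3)) := by ring
              _ ≤ 9 * (v t * v t) := by linarith
              _ = 9 * v t ^ 2 := by ring
          have step1 : C * (Δ ^ 2 * u s ^ 2) * (t + R₀) ≤ C * (9 * v t ^ 2) * (t + R₀) := by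
            apply mul_le_mul_of_nonneg_right ?_ (by linarith)
            exact mul_le_mul_of_nonneg_left h9' hC.le
          have step2 : C * (9 * v t ^ 2) * (t + R₀) ≤ C * (9 * v t ^ 2) * (T₁ + 1 + R₀) := by
            apply mul_le_mul_of_nonneg_left hτβ (by positivity)
          have step3 : C * (9 * v t ^ 2) * (T₁ + 1 + R₀) = C * v t ^ 2 * β := by
            rw [hβdef]; ring
          linarith
        linarith
    have hend := hmono
      (show s + Δ ∈ Icc (s + Δ) (s + 2*Δ) by constructor <;> [linarith; linarith])
      (show s + 2*Δ ∈ Icc (s + Δ) (s + 2*Δ) by constructor <;> [linarith; linarith])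
      (by linarith)
    simp only at hend
    have h6 : u s ≤ u (s + Δ) := humono (by simp only [mem_Ici]; linarith)
      (by simp only [mem_Ici]; linarith) (by linarith)
    have h7 : g * (s + 2 * Δ) - g * (s + Δ) = C / β * Δ ^ 3 * u s ^ 2 := by
      rw [hgdef]; ring
    linarith
  -- Phase 2 : blow-up inside the unit window
  have hph2 : ∀ k : ℕ, N * 8 ^ k ≤ u (T₁ + 1 - (1/2) ^ k) := by
    intro k
    induction k with
    | zero => simpa using hbase
    | succ k ih =>
      set s : ℝ := T₁ + 1 - (1/2) ^ k with hsdef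
      set Δ : ℝ := (1/2:ℝ) ^ (k + 2) with hΔdef
      have hpk0 : (0:ℝ) < (1/2:ℝ) ^ k := by positivity
      have hpk1 : ((1:ℝ)/2) ^ k ≤ 1 := pow_le_one₀ (by norm_num) (by norm_num)
      have hΔ0 : 0 < Δ := by rw [hΔdef]; positivity
      have hΔeq : Δ = (1/2:ℝ) ^ k * (1/4) := by
        rw [hΔdef, pow_add]; norm_num
      have hΔh : Δ ≤ 1/2 := by
        rw [hΔeq]
        calc ((1:ℝ)/2) ^ k * (1/4) ≤ 1 * (1/4) :=
              mul_le_mul_of_nonneg_right hpk1 (by norm_num)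
          _ ≤ 1/2 := by norm_num
      have hsT₁ : T₁ ≤ s := by rw [hsdef]; linarith
      have hwin : s + 2 * Δ ≤ T₁ + 1 := by rw [hsdef, hΔeq]; linarith
      have hg := hGain s Δ hsT₁ hΔ0 hΔh hwin
      have hse : s + 2 * Δ = T₁ + 1 - (1/2) ^ (k + 1) := by
        rw [hsdef, hΔeq, pow_add]; ring_nf
      rw [hse] at hg
      have hs0 : (0:ℝ) ≤ s := by linarith [hT₁0, hsT₁]
      have hus : 0 < u s := hupos s hs0
      have h3k : (((1:ℝ)/2) ^ k) ^ 3 = ((1:ℝ)/8) ^ k := by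
        rw [← pow_mul, mul_comm, pow_mul]; norm_num
      have h18 : ((1:ℝ)/8) ^ k * 8 ^ k = 1 := by rw [← mul_pow]; norm_num
      have hΔ3 : Δ ^ 3 * 8 ^ k = 1/64 := by
        calc Δ ^ 3 * 8 ^ k = (((1:ℝ)/2) ^ k) ^ 3 * (1/64) * 8 ^ k := by rw [hΔeq]; ring
          _ = ((1:ℝ)/8) ^ k * 8 ^ k * (1/64) := by rw [h3k]; ring
          _ = 1/64 := by rw [h18]; ring
      have hκN : C / β * N = 448 := by
        rw [hNdef]; field_simp
      have h7 : C / β * Δ ^ 3 * (N * 8 ^ k) = 7 := by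
        calc C / β * Δ ^ 3 * (N * 8 ^ k) = (C / β * N) * (Δ ^ 3 * 8 ^ k) := by ring
          _ = 448 * (1/64) := by rw [hκN, hΔ3]
          _ = 7 := by norm_num
      have h8 : (0:ℝ) < 8 ^ k := by positivity
      have hκΔ : (0:ℝ) ≤ C / β * Δ ^ 3 := by positivity
      have hmul : C / β * Δ ^ 3 * (N * 8 ^ k) ≤ C / β * Δ ^ 3 * u s :=
        mul_le_mul_of_nonneg_left ih hκΔ
      have h7' : (7:ℝ) ≤ C / β * Δ ^ 3 * u s := by rw [← h7]; exact hmul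
      have hsq : 7 * u s ≤ C / β * Δ ^ 3 * u s ^ 2 := by
        have hm3 : 7 * u s ≤ (C / β * Δ ^ 3 * u s) * u s :=
          mul_le_mul_of_nonneg_right h7' hus.le
        have he3 : (C / β * Δ ^ 3 * u s) * u s = C / β * Δ ^ 3 * u s ^ 2 := by ring
        linarith
      have h8s : (8:ℝ) ^ (k + 1) = 8 * 8 ^ k := by ring
      rw [h8s]
      linarith [hg, hsq, ih]
  -- final contradiction
  obtain ⟨k, hk⟩ := pow_unbounded_of_one_lt (u (T₁ + 1) / N) (show (1:ℝ) < 8 by norm_num)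
  have hpk1 : ((1:ℝ)/2) ^ k ≤ 1 := pow_le_one₀ (by norm_num) (by norm_num)
  have hpk0 : (0:ℝ) < (1/2:ℝ) ^ k := by positivity
  have h1 : u (T₁ + 1 - (1/2) ^ k) ≤ u (T₁ + 1) := by
    apply humono (by simp only [mem_Ici]; linarith) (by simp only [mem_Ici]; linarith)
    linarith
  have h2 := hph2 k
  have h3 : u (T₁ + 1) < N * 8 ^ k := by
    rw [div_lt_iff₀ hN] at hk
    linarith
  linarith

end
end

section
/- Let C > 0 and R₀ = 1 and n = 3. There exists a constant C' > 0 (depending only on C) such that: if X : [0,T) → ℝ is C², satisfies X''(t) ≥ C X(t)² / (e^t (t+1)) + X(t) for all t ∈ [0,T), and ε := X(0) + X'(0) > 0, then T ≤ e^{C'/ε}. -/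
open Real Set
open scoped ENNReal

noncomputable section

/-- The time interval `[0, T)` for an extended-real final time `T ∈ (0, ∞]`. -/
def timeSet (T : ℝ≥0∞) : Set ℝ := {t : ℝ | 0 ≤ t ∧ ENNReal.ofReal t < T}

namespace OdeBlowupAux

/- Auxiliary definitions: test function `psi t = exp (-t) * (1 - (log (1+t)/ℓ)^2)^4`
and its first and second derivatives. -/

noncomputable def sg (ℓ t : ℝ) : ℝ := log (1+t) / ℓ
noncomputable def qq (ℓ t : ℝ) : ℝ := 1 - (sg ℓ t)^2
noncomputable def iv (ℓ t : ℝ) : ℝ := (ℓ*(1+t))⁻¹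
noncomputable def psi (ℓ t : ℝ) : ℝ := exp (-t) * (qq ℓ t)^4
noncomputable def psi1 (ℓ t : ℝ) : ℝ :=
  exp (-t) * (-(qq ℓ t)^4 - 8 * sg ℓ t * (qq ℓ t)^3 * iv ℓ t)
noncomputable def psi2 (ℓ t : ℝ) : ℝ :=
  exp (-t) * ((qq ℓ t)^4 + 16 * sg ℓ t * (qq ℓ t)^3 * iv ℓ t
    - 8 * (iv ℓ t)^2 * ((qq ℓ t)^3 - 6 * (sg ℓ t)^2 * (qq ℓ t)^2 - ℓ * sg ℓ t * (qq ℓ t)^3))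

lemma hasDerivAt_sg (ℓ t : ℝ) (ht : -1 < t) :
    HasDerivAt (sg ℓ) ((1+t)⁻¹ / ℓ) t := by
  have h1t : (0:ℝ) < 1 + t := by linarith
  have hL : HasDerivAt (fun t : ℝ => log (1+t)) ((1+t)⁻¹) t := by
    simpa [Function.comp_def] using (Real.hasDerivAt_log h1t.ne').comp t ((hasDerivAt_id t).const_add 1)
  exact hL.div_const ℓ

lemma hasDerivAt_qq (ℓ t : ℝ) (ht : -1 < t) :
    HasDerivAt (qq ℓ) (-(2 * sg ℓ t * ((1+t)⁻¹ / ℓ))) t := by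
  have := ((hasDerivAt_sg ℓ t ht).pow 2).const_sub 1
  show HasDerivAt (fun x => 1 - sg ℓ x ^ 2) _ t
  simpa using this

lemma hasDerivAt_iv (ℓ t : ℝ) (ht : -1 < t) (hℓ : 0 < ℓ) :
    HasDerivAt (iv ℓ) (-ℓ / (ℓ*(1+t))^2) t := by
  have h1t : (0:ℝ) < 1 + t := by linarith
  have hc : HasDerivAt (fun t : ℝ => ℓ*(1+t)) ℓ t := by
    simpa using ((hasDerivAt_id t).const_add 1).const_mul ℓ
  exact hc.inv (by positivity)

lemma hasDerivAt_exp_neg (t : ℝ) :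
    HasDerivAt (fun t : ℝ => exp (-t)) (-exp (-t)) t := by
  simpa [Function.comp_def] using (Real.hasDerivAt_exp (-t)).comp t ((hasDerivAt_id t).neg)

lemma hasDerivAt_psi (ℓ t : ℝ) (ht : -1 < t) (hℓ : 0 < ℓ) :
    HasDerivAt (psi ℓ) (psi1 ℓ t) t := by
  have h1t : (0:ℝ) < 1 + t := by linarith
  have h := (hasDerivAt_exp_neg t).mul ((hasDerivAt_qq ℓ t ht).pow 4)
  refine h.congr_deriv ?_
  simp only [psi1, iv, Nat.cast_ofNat, Pi.pow_apply]
  field_simp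
  ring

lemma hasDerivAt_psi1 (ℓ t : ℝ) (ht : -1 < t) (hℓ : 0 < ℓ) :
    HasDerivAt (psi1 ℓ) (psi2 ℓ t) t := by
  have h1t : (0:ℝ) < 1 + t := by linarith
  have hs := hasDerivAt_sg ℓ t ht
  have hq := hasDerivAt_qq ℓ t ht
  have hi := hasDerivAt_iv ℓ t ht hℓ
  have hu : HasDerivAt (fun t => -(qq ℓ t)^4 - 8 * sg ℓ t * (qq ℓ t)^3 * iv ℓ t)
      (-(4*(qq ℓ t)^3 * (-(2 * sg ℓ t * ((1+t)⁻¹ / ℓ))))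
        - 8 * ((((1+t)⁻¹ / ℓ) * (qq ℓ t)^3
            + sg ℓ t * (3*(qq ℓ t)^2 * (-(2 * sg ℓ t * ((1+t)⁻¹ / ℓ))))) * iv ℓ t
            + sg ℓ t * (qq ℓ t)^3 * (-ℓ / (ℓ*(1+t))^2))) t := by
    have h2 := (((hs.mul (hq.pow 3)).mul hi).const_mul (8:ℝ))
    have h3 := ((hq.pow 4).neg).sub h2
    convert h3 using 1
    all_goals first
      | rfl
      | (funext x; simp only [Pi.sub_apply, Pi.neg_apply, Pi.pow_apply, Pi.mul_apply]; ring)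
      | (push_cast; ring)
  have h := (hasDerivAt_exp_neg t).mul hu
  refine h.congr_deriv ?_
  simp only [psi2, psi1, iv, sg]
  field_simp
  ring

lemma keyE (s q r G : ℝ) (hs0 : 0 ≤ s) (hs1 : s ≤ 1) (hq : q = 1 - s^2)
    (hr0 : 0 < r) (hr1 : r ≤ 1) (hG : 0 < G) :
    (16*s*q^3*(G*r) + 8*s*q^3*(G*r)*r - 8*(G*r)^2*q^3 + 48*s^2*q^2*(G*r)^2)^2
      ≤ (240*G^2 + 18432*G^4) * q^4 * r^2 := by
  have hq0 : 0 ≤ q := by nlinarith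
  have hq1 : q ≤ 1 := by nlinarith [sq_nonneg s]
  have h27 : 27*(s^2*q^2) ≤ 4 := by
    subst hq
    nlinarith [mul_nonneg (sq_nonneg (3*s^2-1)) (by nlinarith : (0:ℝ) ≤ 4 - 3*s^2)]
  have h16 : (16+8*r)^2 ≤ 576 := by nlinarith
  have ha2 : (16*s*q+8*s*q*r)^2 ≤ 2304/27 := by
    calc (16*s*q+8*s*q*r)^2 = (s*q)^2*(16+8*r)^2 := by ring
    _ ≤ (s*q)^2*576 := mul_le_mul_of_nonneg_left h16 (sq_nonneg _)
    _ ≤ (4/27)*576 := by nlinarith [sq_nonneg (s*q)]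
    _ = 2304/27 := by norm_num
  have hb48 : (48*s^2-8*q)^2 ≤ 2304 := by nlinarith [sq_nonneg s]
  have hb2 : (G*r*(48*s^2-8*q))^2 ≤ 2304*G^2 := by
    calc (G*r*(48*s^2-8*q))^2 = (G^2*r^2)*(48*s^2-8*q)^2 := by ring
    _ ≤ (G^2*r^2)*2304 := mul_le_mul_of_nonneg_left hb48 (by positivity)
    _ ≤ (G^2*1)*2304 := by
        nlinarith [mul_nonneg (sq_nonneg G) (by nlinarith : (0:ℝ) ≤ 1 - r^2)]
    _ = 2304*G^2 := by ring
  have hW : (16*s*q + 8*s*q*r + G*r*(48*s^2-8*q))^2 ≤ 240 + 18432*G^2 := by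
    nlinarith [sq_nonneg (16*s*q+8*s*q*r - G*r*(48*s^2-8*q)), ha2, hb2, sq_nonneg G]
  calc (16*s*q^3*(G*r) + 8*s*q^3*(G*r)*r - 8*(G*r)^2*q^3 + 48*s^2*q^2*(G*r)^2)^2
      = (G^2*r^2*q^4)*(16*s*q + 8*s*q*r + G*r*(48*s^2-8*q))^2 := by ring
    _ ≤ (G^2*r^2*q^4)*(240 + 18432*G^2) := mul_le_mul_of_nonneg_left hW (by positivity)
    _ = (240*G^2 + 18432*G^4) * q^4 * r^2 := by ring

set_option maxHeartbeats 1000000 in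
/-- The main integral estimate: if the differential inequality holds on `[0,b] ⊆ S`, then
`ε = X 0 + X' 0` is bounded by `60/(C ℓ) + 4608/(C ℓ³)` where `ℓ = log (1+b)`. -/
lemma main_bound (C : ℝ) (hC : 0 < C) (S : Set ℝ) (X : ℝ → ℝ) (b : ℝ) (hb : 0 < b)
    (hSsub : Set.Icc 0 b ⊆ S) (hSU : UniqueDiffOn ℝ S)
    (hXc : ContDiffOn ℝ 2 X S)
    (hIneq : ∀ t ∈ Set.Icc (0:ℝ) b,
      derivWithin (derivWithin X S) S t ≥ C * X t ^ 2 / (exp t * (t + 1)) + X t) :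
    X 0 + derivWithin X S 0 ≤ 60/(C*log (1+b)) + 4608/(C*(log (1+b))^3) := by
  set ℓ := log (1+b) with hℓdef
  have hℓ : 0 < ℓ := Real.log_pos (by linarith)
  set Y := derivWithin X S with hYdef
  set Z := derivWithin Y S with hZdef
  set D := 120/ℓ^2 + 9216/ℓ^4 with hDdef
  have hDpos : 0 < D := by positivity
  have hIooSub : Set.Ioo (0:ℝ) b ⊆ S := fun x hx => hSsub ⟨hx.1.le, hx.2.le⟩
  have hnhds : ∀ t ∈ Set.Ioo (0:ℝ) b, S ∈ nhds t := fun t ht =>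
    Filter.mem_of_superset (Ioo_mem_nhds ht.1 ht.2) hIooSub
  have hXd : DifferentiableOn ℝ X S := hXc.differentiableOn (by norm_num)
  have hY1 : ContDiffOn ℝ 1 Y S := hXc.derivWithin hSU (by norm_num)
  have hYd : DifferentiableOn ℝ Y S := hY1.differentiableOn (by norm_num)
  have hYcont : ContinuousOn Y S := hY1.continuousOn
  have hZcont : ContinuousOn Z S := hY1.continuousOn_derivWithin hSU le_rfl
  have hXcont : ContinuousOn X S := hXc.continuousOn
  have hXder : ∀ t ∈ Set.Ioo (0:ℝ) b, HasDerivAt X (Y t) t := fun t ht =>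
    ((hXd t (hIooSub ht)).hasDerivWithinAt).hasDerivAt (hnhds t ht)
  have hYder : ∀ t ∈ Set.Ioo (0:ℝ) b, HasDerivAt Y (Z t) t := fun t ht =>
    ((hYd t (hIooSub ht)).hasDerivWithinAt).hasDerivAt (hnhds t ht)
  -- special values
  have hsg0 : sg ℓ 0 = 0 := by simp [sg]
  have hqq0 : qq ℓ 0 = 1 := by simp [qq, hsg0]
  have hpsi0 : psi ℓ 0 = 1 := by simp [psi, hqq0]
  have hpsi10 : psi1 ℓ 0 = -1 := by simp [psi1, hsg0, hqq0]
  have hsgb : sg ℓ b = 1 := by rw [sg, ← hℓdef, div_self hℓ.ne']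
  have hqqb : qq ℓ b = 0 := by simp [qq, hsgb]
  have hpsib : psi ℓ b = 0 := by simp [psi, hqqb]
  have hpsi1b : psi1 ℓ b = 0 := by simp [psi1, hqqb]
  have hpsi2b : psi2 ℓ b = 0 := by simp [psi2, hqqb]
  -- continuity of the test functions on [0,b]
  have hψcont : ContinuousOn (psi ℓ) (Icc 0 b) := fun t ht =>
    ((hasDerivAt_psi ℓ t (by linarith [ht.1]) hℓ).continuousAt).continuousWithinAt
  have hψ1cont : ContinuousOn (psi1 ℓ) (Icc 0 b) := fun t ht =>
    ((hasDerivAt_psi1 ℓ t (by linarith [ht.1]) hℓ).continuousAt).continuousWithinAt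
  have hψ2cont : ContinuousOn (psi2 ℓ) (Icc 0 b) := by
    intro t ht
    have h1t : (-1:ℝ) < t := by linarith [ht.1]
    have hsgc : ContinuousAt (sg ℓ) t := (hasDerivAt_sg ℓ t h1t).continuousAt
    have hivc : ContinuousAt (iv ℓ) t := (hasDerivAt_iv ℓ t h1t hℓ).continuousAt
    have hqc : ContinuousAt (qq ℓ) t := (hasDerivAt_qq ℓ t h1t).continuousAt
    have : ContinuousAt (psi2 ℓ) t := by
      unfold psi2
      exact ((Real.continuous_exp.comp continuous_neg).continuousAt).mul
        (((hqc.pow 4).add (((continuousAt_const.mul hsgc).mul (hqc.pow 3)).mul hivc)).sub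
          ((continuousAt_const.mul (hivc.pow 2)).mul
            (((hqc.pow 3).sub ((continuousAt_const.mul (hsgc.pow 2)).mul (hqc.pow 2))).sub
              ((continuousAt_const.mul hsgc).mul (hqc.pow 3)))))
    exact this.continuousWithinAt
  -- range facts
  have hsg_nonneg : ∀ t ∈ Icc (0:ℝ) b, 0 ≤ sg ℓ t := fun t ht =>
    div_nonneg (Real.log_nonneg (by linarith [ht.1])) hℓ.le
  have hsg_le_one : ∀ t ∈ Icc (0:ℝ) b, sg ℓ t ≤ 1 := by
    intro t ht
    rw [sg, div_le_one hℓ, hℓdef]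
    exact Real.log_le_log (by linarith [ht.1]) (by linarith [ht.2])
  have hqq_nonneg : ∀ t ∈ Icc (0:ℝ) b, 0 ≤ qq ℓ t := by
    intro t ht
    have h0 := hsg_nonneg t ht; have h1 := hsg_le_one t ht
    rw [qq]; nlinarith
  have hψnonneg : ∀ t ∈ Icc (0:ℝ) b, 0 ≤ psi ℓ t := by
    intro t ht
    have := hqq_nonneg t ht
    rw [psi]; positivity
  -- pointwise estimate
  have hpt : ∀ t ∈ Icc (0:ℝ) b,
      -(D/(2*C*(1+t))) ≤ Z t * psi ℓ t - X t * psi2 ℓ t := by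
    intro t ht
    have ht0 : (0:ℝ) ≤ t := ht.1
    have h1t : (0:ℝ) < 1 + t := by linarith
    have hhpos : 0 < D/(2*C*(1+t)) := by positivity
    rcases eq_or_lt_of_le ht.2 with rfl | hlt
    · rw [hpsib, hpsi2b]
      simp only [mul_zero, sub_zero]
      linarith
    · -- t < b
      have hslt : sg ℓ t < 1 := by
        rw [sg, div_lt_one hℓ, hℓdef]
        exact Real.log_lt_log (by linarith) (by linarith)
      have hs0 := hsg_nonneg t ht
      have hqpos : 0 < qq ℓ t := by rw [qq]; nlinarith
      have hψpos : 0 < psi ℓ t := mul_pos (exp_pos _) (pow_pos hqpos 4)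
      set A := C * psi ℓ t / (exp t * (t+1)) with hAdef
      have hA : 0 < A := div_pos (mul_pos hC hψpos) (by positivity)
      -- the key quadratic bound
      have hφsq : (psi2 ℓ t - psi ℓ t)^2 ≤ 4*A*(D/(2*C*(1+t))) := by
        have hEeq : psi2 ℓ t - psi ℓ t
            = exp (-t) * (16*(sg ℓ t)*(qq ℓ t)^3*(ℓ⁻¹*(1+t)⁻¹)
              + 8*(sg ℓ t)*(qq ℓ t)^3*(ℓ⁻¹*(1+t)⁻¹)*(1+t)⁻¹
              - 8*(ℓ⁻¹*(1+t)⁻¹)^2*(qq ℓ t)^3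
              + 48*(sg ℓ t)^2*(qq ℓ t)^2*(ℓ⁻¹*(1+t)⁻¹)^2) := by
          simp only [psi2, psi, iv]
          field_simp
          ring
        have hkey := keyE (sg ℓ t) (qq ℓ t) ((1+t)⁻¹) ℓ⁻¹ hs0 hslt.le rfl
          (by positivity) (by rw [inv_le_one_iff₀]; right; linarith) (by positivity)
        have h4Ah : 4*A*(D/(2*C*(1+t)))
            = (exp (-t))^2 * ((240*(ℓ⁻¹)^2 + 18432*(ℓ⁻¹)^4) * (qq ℓ t)^4 * ((1+t)⁻¹)^2) := by
          rw [hAdef, hDdef]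
          simp only [psi]
          rw [Real.exp_neg]
          field_simp
          ring
        calc (psi2 ℓ t - psi ℓ t)^2
            = (exp (-t))^2 * (16*(sg ℓ t)*(qq ℓ t)^3*(ℓ⁻¹*(1+t)⁻¹)
              + 8*(sg ℓ t)*(qq ℓ t)^3*(ℓ⁻¹*(1+t)⁻¹)*(1+t)⁻¹
              - 8*(ℓ⁻¹*(1+t)⁻¹)^2*(qq ℓ t)^3
              + 48*(sg ℓ t)^2*(qq ℓ t)^2*(ℓ⁻¹*(1+t)⁻¹)^2)^2 := by rw [hEeq]; ring
          _ ≤ (exp (-t))^2 * ((240*(ℓ⁻¹)^2 + 18432*(ℓ⁻¹)^4) * (qq ℓ t)^4 * ((1+t)⁻¹)^2) := by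
              apply mul_le_mul_of_nonneg_left _ (sq_nonneg _)
              exact hkey
          _ = 4*A*(D/(2*C*(1+t))) := h4Ah.symm
      have hZineq : Z t ≥ C * X t ^ 2 / (exp t * (t + 1)) + X t := hIneq t ht
      have h1 : (C * X t ^ 2 / (exp t * (t + 1)) + X t) * psi ℓ t ≤ Z t * psi ℓ t :=
        mul_le_mul_of_nonneg_right hZineq hψpos.le
      have h2 : (C * X t ^ 2 / (exp t * (t + 1)) + X t) * psi ℓ t
          = A * X t^2 + X t * psi ℓ t := by rw [hAdef]; ring
      have key : 0 ≤ A * X t^2 - X t * (psi2 ℓ t - psi ℓ t) + D/(2*C*(1+t)) := by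
        have e1 : (0:ℝ) ≤ (2*A*X t - (psi2 ℓ t - psi ℓ t))^2 := sq_nonneg _
        have e2 : 4*A*(A * X t^2 - X t * (psi2 ℓ t - psi ℓ t) + D/(2*C*(1+t)))
            = (2*A*X t - (psi2 ℓ t - psi ℓ t))^2
              + (4*A*(D/(2*C*(1+t))) - (psi2 ℓ t - psi ℓ t)^2) := by ring
        have e3 : 0 ≤ 4*A*(A * X t^2 - X t * (psi2 ℓ t - psi ℓ t) + D/(2*C*(1+t))) := by
          rw [e2]; linarith
        by_contra hK
        push_neg at hK
        nlinarith [mul_pos (by linarith : (0:ℝ) < 4*A) (by linarith :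
          (0:ℝ) < -(A * X t^2 - X t * (psi2 ℓ t - psi ℓ t) + D/(2*C*(1+t))))]
      have hid : X t * (psi2 ℓ t - psi ℓ t) = X t * psi2 ℓ t - X t * psi ℓ t := by ring
      rw [h2] at h1
      linarith [h1, key, hid]
  -- FTC for Φ = Y ψ - X ψ₁
  have hFTC : ∫ t in (0:ℝ)..b, (Z t * psi ℓ t - X t * psi2 ℓ t)
      = (Y b * psi ℓ b - X b * psi1 ℓ b) - (Y 0 * psi ℓ 0 - X 0 * psi1 ℓ 0) := by
    apply intervalIntegral.integral_eq_sub_of_hasDeriv_right_of_le hb.le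
    · exact ((hYcont.mono hSsub).mul hψcont).sub ((hXcont.mono hSsub).mul hψ1cont)
    · intro t ht
      have h1t : (-1:ℝ) < t := by linarith [ht.1]
      have h : HasDerivAt (fun t => Y t * psi ℓ t - X t * psi1 ℓ t)
          (Z t * psi ℓ t - X t * psi2 ℓ t) t := by
        have := ((hYder t ht).mul (hasDerivAt_psi ℓ t h1t hℓ)).sub
          ((hXder t ht).mul (hasDerivAt_psi1 ℓ t h1t hℓ))
        refine this.congr_deriv ?_
        ring
      exact h.hasDerivWithinAt
    · apply ContinuousOn.intervalIntegrable
      rw [uIcc_of_le hb.le]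
      exact ((hZcont.mono hSsub).mul hψcont).sub ((hXcont.mono hSsub).mul hψ2cont)
  -- integral of the lower bound
  have hHint : ∫ t in (0:ℝ)..b, (-(D/(2*C*(1+t)))) = -(D/(2*C))*ℓ := by
    have : ∫ t in (0:ℝ)..b, (-(D/(2*C*(1+t))))
        = (-(D/(2*C))*log (1+b)) - (-(D/(2*C))*log (1+0)) := by
      apply intervalIntegral.integral_eq_sub_of_hasDerivAt
      · intro t ht
        rw [uIcc_of_le hb.le] at ht
        have h1t : (0:ℝ) < 1 + t := by linarith [ht.1]
        have hL : HasDerivAt (fun t : ℝ => log (1+t)) ((1+t)⁻¹) t := by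
          simpa [Function.comp_def] using (Real.hasDerivAt_log h1t.ne').comp t ((hasDerivAt_id t).const_add 1)
        have := hL.const_mul (-(D/(2*C)))
        refine this.congr_deriv ?_
        try field_simp
        try ring
      · apply ContinuousOn.intervalIntegrable
        rw [uIcc_of_le hb.le]
        apply ContinuousOn.neg
        apply ContinuousOn.div continuousOn_const
        · fun_prop
        · intro t ht
          have := ht.1
          positivity
    rw [this]
    simp [← hℓdef]
  -- integrability of both sides
  have hint2 : IntervalIntegrable (fun t => Z t * psi ℓ t - X t * psi2 ℓ t)
      MeasureTheory.volume 0 b := by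
    apply ContinuousOn.intervalIntegrable
    rw [uIcc_of_le hb.le]
    exact ((hZcont.mono hSsub).mul hψcont).sub ((hXcont.mono hSsub).mul hψ2cont)
  have hint1 : IntervalIntegrable (fun t => -(D/(2*C*(1+t)))) MeasureTheory.volume 0 b := by
    apply ContinuousOn.intervalIntegrable
    rw [uIcc_of_le hb.le]
    apply ContinuousOn.neg
    apply ContinuousOn.div continuousOn_const
    · fun_prop
    · intro t ht
      have := ht.1
      positivity
  have hmono := intervalIntegral.integral_mono_on hb.le hint1 hint2 hpt
  rw [hFTC, hHint] at hmono
  rw [hpsib, hpsi1b, hpsi0, hpsi10] at hmono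
  -- hmono : -(D/(2C))*ℓ ≤ 0 - (Y 0 * 1 - X 0 * (-1))
  have hfin : X 0 + Y 0 ≤ (D/(2*C))*ℓ := by linarith [hmono]
  have heq : (D/(2*C))*ℓ = 60/(C*ℓ) + 4608/(C*ℓ^3) := by
    rw [hDdef]
    field_simp
    ring
  rw [heq] at hfin
  exact hfin

end OdeBlowupAux

set_option maxHeartbeats 1000000 in
open OdeBlowupAux in
/-- (`n = 3`, `R₀ = 1`.)  For every `C > 0` there is `C' > 0` such that any `C²` function
`X : [0,T) → ℝ` satisfying `X'' ≥ C X² / (eᵗ (t+1)) + X` on `[0,T)` with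
`ε := X(0) + X'(0) > 0` has `T ≤ e^{C'/ε}`. -/
theorem ode_blowup_lifespan_dim3 (C : ℝ) (hC : 0 < C) :
    ∃ C' > (0 : ℝ), ∀ (T : ℝ≥0∞) (X : ℝ → ℝ),
      0 < T →
      ContDiffOn ℝ 2 X (timeSet T) →
      (∀ t ∈ timeSet T,
        derivWithin (derivWithin X (timeSet T)) (timeSet T) t ≥
          C * X t ^ 2 / (exp t * (t + 1)) + X t) →
      0 < X 0 + derivWithin X (timeSet T) 0 →
      T ≤ ENNReal.ofReal (exp (C' / (X 0 + derivWithin X (timeSet T) 0))) := by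
  refine ⟨37344/C, by positivity, ?_⟩
  intro T X hT hXc hODE hε
  set ε := X 0 + derivWithin X (timeSet T) 0 with hεdef
  by_contra hcon
  push_neg at hcon
  obtain ⟨p, hp0, hap, hpT⟩ := ENNReal.lt_iff_exists_real_btwn.1 hcon
  have hppos : 0 < p := by
    by_contra h
    push_neg at h
    rw [ENNReal.ofReal_eq_zero.2 h] at hap
    simpa using hap
  have hexp_lt : exp (37344/C/ε) < p := (ENNReal.ofReal_lt_ofReal_iff hppos).1 hap
  have hCε : 0 < 37344/C/ε := by positivity
  have hone_lt : ∀ x : ℝ, 0 < x → 1 < exp x := fun x hx => by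
    nlinarith [Real.add_one_le_exp x]
  have hp1 : 1 < p := lt_trans (hone_lt _ hCε) hexp_lt
  -- set S facts
  have hSsub : Set.Icc 0 p ⊆ timeSet T := fun t ht =>
    ⟨ht.1, lt_of_le_of_lt (ENNReal.ofReal_le_ofReal ht.2) hpT⟩
  have hconv : Convex ℝ (timeSet T) := by
    intro x hx y hy a c ha hc hac
    refine ⟨by simp only [smul_eq_mul]; nlinarith [hx.1, hy.1], ?_⟩
    have hle : a • x + c • y ≤ max x y := by
      simp only [smul_eq_mul]
      rcases le_total x y with h | h
      · rw [max_eq_right h]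
        calc a*x + c*y ≤ a*y + c*y := by nlinarith [mul_le_mul_of_nonneg_left h ha]
          _ = y := by rw [← add_mul, hac, one_mul]
      · rw [max_eq_left h]
        calc a*x + c*y ≤ a*x + c*x := by nlinarith [mul_le_mul_of_nonneg_left h hc]
          _ = x := by rw [← add_mul, hac, one_mul]
    refine lt_of_le_of_lt (ENNReal.ofReal_le_ofReal hle) ?_
    rcases le_total x y with h | h
    · rw [max_eq_right h]; exact hy.2
    · rw [max_eq_left h]; exact hx.2
  have hSU : UniqueDiffOn ℝ (timeSet T) := by
    apply uniqueDiffOn_convex hconv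
    refine ⟨p/2, ?_⟩
    apply interior_maximal (fun x hx => hSsub ⟨hx.1.le, hx.2.le⟩) isOpen_Ioo
    exact ⟨by positivity, by linarith⟩
  have hbound := main_bound C hC (timeSet T) X p hppos hSsub hSU hXc
    (fun t ht => hODE t (hSsub ht))
  rw [← hεdef] at hbound
  set l := log (1+p) with hldef
  have hl : 0 < l := Real.log_pos (by linarith)
  -- case analysis
  rcases le_or_gt 1 l with hl1 | hl1
  · -- big l : ε ≤ 4668/(C l), so l ≤ 4668/(C ε) < 37344/(C ε)
    have hstep : 4608/(C*l^3) ≤ 4608/(C*l) := by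
      apply div_le_div_of_nonneg_left (by norm_num) (by positivity)
      have hll : l ≤ l^3 := by
        nlinarith [mul_nonneg (mul_nonneg hl.le (by linarith : (0:ℝ) ≤ l - 1))
          (by linarith : (0:ℝ) ≤ l + 1)]
      exact mul_le_mul_of_nonneg_left hll hC.le
    have h1 : ε ≤ 4668/(C*l) := by
      have : 60/(C*l) + 4608/(C*l) = 4668/(C*l) := by ring
      linarith [hbound, hstep]
    have h2 : ε * (C*l) ≤ 4668 := (le_div_iff₀ (by positivity)).1 h1
    have h3 : l < 37344/C/ε := by
      rw [div_div, lt_div_iff₀ (by positivity)]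
      nlinarith
    have h4 : p < exp (37344/C/ε) := by
      have := Real.exp_lt_exp.2 h3
      rw [Real.exp_log (by linarith : (0:ℝ) < 1 + p)] at this
      linarith
    linarith
  · -- small l
    have hstep : 60/(C*l) ≤ 60/(C*l^3) := by
      apply div_le_div_of_nonneg_left (by norm_num) (by positivity)
      have hll : l^3 ≤ l := by
        nlinarith [mul_nonneg (mul_nonneg hl.le (by linarith : (0:ℝ) ≤ 1 - l))
          (by linarith : (0:ℝ) ≤ 1 + l)]
      exact mul_le_mul_of_nonneg_left hll hC.le
    have h1 : ε ≤ 4668/(C*l^3) := by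
      have : 60/(C*l^3) + 4608/(C*l^3) = 4668/(C*l^3) := by ring
      linarith [hbound, hstep]
    have h2 : ε * (C*l^3) ≤ 4668 := (le_div_iff₀ (by positivity)).1 h1
    have hpe : 1 + p < exp 1 := by
      have := Real.exp_lt_exp.2 hl1
      rwa [Real.exp_log (by linarith : (0:ℝ) < 1 + p)] at this
    rcases le_or_gt ε (8*(4668/C)) with hε8 | hε8
    · -- then C'/ε ≥ 1 so exp(C'/ε) ≥ e > p
      have h5 : 1 ≤ 37344/C/ε := by
        rw [div_div, le_div_iff₀ (by positivity)]
        have : C * ε ≤ C * (8*(4668/C)) := by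
          apply mul_le_mul_of_nonneg_left hε8 hC.le
        have hcc : C * (8*(4668/C)) = 37344 := by field_simp; ring
        nlinarith [this, hcc]
      have h6 : exp 1 ≤ exp (37344/C/ε) := Real.exp_le_exp.2 h5
      linarith
    · -- huge ε : l³ < 1/8 so p < 1 < exp(C'/ε)
      have hCε37 : 37344 < C * ε := by
        have : C * (8*(4668/C)) = 37344 := by field_simp; ring
        nlinarith [mul_lt_mul_of_pos_left hε8 hC]
      have h3 : l^3 < 1/8 := by
        by_contra hcon3
        push_neg at hcon3
        have e1 : ε*(C*l^3) = C*ε*l^3 := by ring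
        rw [e1] at h2
        have e2 : 37344 * l^3 < C*ε*l^3 := by
          have := mul_lt_mul_of_pos_right hCε37 (pow_pos hl 3)
          linarith
        linarith
      have h4 : l < 1/2 := by
        by_contra hcon4
        push_neg at hcon4
        have := pow_le_pow_left₀ (by norm_num : (0:ℝ) ≤ 1/2) hcon4 3
        norm_num at this
        linarith
      have hehalf : exp (1/2 : ℝ) < 2 := by
        nlinarith [Real.exp_one_lt_d9, Real.exp_pos (1/2 : ℝ),
          (by rw [← Real.exp_add]; norm_num : exp (1/2 : ℝ) * exp (1/2 : ℝ) = exp 1)]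
      have h5 : p < 1 := by
        have := Real.exp_lt_exp.2 h4
        rw [Real.exp_log (by linarith : (0:ℝ) < 1 + p)] at this
        linarith
      have h6 : 1 < exp (37344/C/ε) := hone_lt _ hCε
      linarith

end
end

section
/- Let n ≥ 2. There exists a constant C > 0 such that for all t ≥ 0, ∫∫_{y² + |z|² ≤ (t+1)²} (e^y + e^{-y}) dz dy ≤ C e^{t+1} (t+1)^{(n-1)/2}, where the integral is over pairs (y, z) ∈ ℝ × ℝ^{n-1} with y² + |z|² ≤ (t+1)². -/
open MeasureTheory Real Set Metric
open scoped ENNReal RealInnerProductSpace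

noncomputable section

lemma integrable_exp_half_abs : Integrable (fun y : ℝ => exp (-|y| / 2)) := by
  have h1 : IntegrableOn (fun y : ℝ => exp (-|y| / 2)) (Ioi (0 : ℝ)) := by
    refine (exp_neg_integrableOn_Ioi 0 (by norm_num : (0:ℝ) < 2⁻¹)).congr_fun
      (fun x hx => ?_) measurableSet_Ioi
    rw [abs_of_pos hx]
    ring_nf
  have h2 : IntegrableOn (fun y : ℝ => exp (-|y| / 2)) (Iic (0 : ℝ)) := by
    rw [IntegrableOn, ← Measure.map_neg_eq_self (volume : Measure ℝ)]
    have m : MeasurableEmbedding fun x : ℝ => -x := (Homeomorph.neg ℝ).measurableEmbedding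
    rw [Measure.restrict_map m.measurable measurableSet_Iic, m.integrable_map_iff]
    simp only [Function.comp_def, abs_neg, neg_preimage, neg_Iic, neg_zero]
    exact Iff.mpr integrableOn_Ici_iff_integrableOn_Ioi h1
  have := h2.union h1
  rwa [Iic_union_Ioi, integrableOn_univ] at this

lemma integral_exp_half_abs : ∫ y : ℝ, exp (-|y| / 2) = 4 := by
  rw [integral_comp_abs (f := fun x => exp (-x / 2))]
  have : ∀ x : ℝ, exp (-x / 2) = exp (-(2⁻¹ * x)) := fun x => by ring_nf
  simp_rw [this]
  rw [integral_comp_mul_left_Ioi (fun x => exp (-x)) 0 (by norm_num : (0:ℝ) < 2⁻¹)]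
  simp [integral_exp_neg_Ioi_zero]
  rw [integral_exp_Iic_zero]; norm_num

lemma integrable_exp_half_abs_shift (c : ℝ) :
    Integrable (fun y : ℝ => exp (-|y - c| / 2)) := by
  have := integrable_exp_half_abs.comp_add_right (-c)
  simpa [sub_eq_add_neg] using this

lemma integral_exp_half_abs_shift (c : ℝ) : ∫ y : ℝ, exp (-|y - c| / 2) = 4 := by
  have := integral_add_right_eq_self (μ := (volume : Measure ℝ))
    (fun y : ℝ => exp (-|y| / 2)) (-c)
  simp only [← sub_eq_add_neg] at this
  rw [this, integral_exp_half_abs]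

/-- For `n ≥ 2` there is `C > 0` such that for all `t ≥ 0`,
`∫∫_{y² + |z|² ≤ (t+1)²} (e^y + e^{-y}) dz dy ≤ C e^{t+1} (t+1)^{(n-1)/2}`. -/
theorem ball_integral_cosh_bound (n : ℕ) (hn : 2 ≤ n) :
    ∃ C > (0 : ℝ), ∀ t : ℝ, 0 ≤ t →
      (∫ x in closedBall (0 : Euc n) (t + 1),
          exp (x ⟨0, by omega⟩) + exp (-(x ⟨0, by omega⟩)))
        ≤ C * exp (t + 1) * (t + 1) ^ (((n : ℝ) - 1) / 2) := by
  have hπ : (0:ℝ) < 4 * π := by positivity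
  refine ⟨8 * (4 * π) ^ (((n : ℝ) - 1) / 2), by positivity, fun t ht => ?_⟩
  set i0 : Fin n := ⟨0, by omega⟩ with hi0
  set R : ℝ := t + 1 with hRdef
  have hR1 : (1:ℝ) ≤ R := by simp [hRdef]; linarith
  have hR0 : (0:ℝ) < R := by linarith
  -- the dominating factor functions
  set g : Fin n → ℝ → ℝ := fun i u =>
    if i = i0 then exp (-|u - R| / 2) + exp (-|u + R| / 2)
    else exp (-(1 / (4 * R)) * u ^ 2) with hg
  have hg_nonneg : ∀ i u, 0 ≤ g i u := by
    intro i u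
    by_cases h : i = i0 <;> simp [hg, h] <;> positivity
  -- integrability of each factor
  have hg_int : ∀ i, Integrable (g i) := by
    intro i
    by_cases h : i = i0
    · simp only [hg, h, if_true]
      refine (integrable_exp_half_abs_shift R).add ?_
      have := integrable_exp_half_abs_shift (-R)
      simpa [sub_neg_eq_add] using this
    · simp only [hg, h, if_false]
      exact integrable_exp_neg_mul_sq (by positivity)
  -- values of the integrals of the factors
  have hg_i0 : ∫ u, g i0 u = 8 := by
    simp only [hg, if_true]
    rw [integral_add (integrable_exp_half_abs_shift R)
      (by have := integrable_exp_half_abs_shift (-R); simpa [sub_neg_eq_add] using this)]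
    have h1 := integral_exp_half_abs_shift R
    have h2 := integral_exp_half_abs_shift (-R)
    simp only [sub_neg_eq_add] at h2
    rw [h1, h2]; norm_num
  have hg_other : ∀ i, i ≠ i0 → ∫ u, g i u = √(4 * π * R) := by
    intro i h
    simp only [hg, h, if_false]
    rw [integral_gaussian]
    congr 1
    field_simp
  -- the dominating function on Euclidean space
  set G : Euc n → ℝ := fun x => ∏ i, g i (x i) with hG
  -- integrability of G
  have hPi_int : Integrable (fun v : Fin n → ℝ => ∏ i, g i (v i)) :=
    Integrable.fintype_prod (f := fun i => g i) hg_int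
  have mp := EuclideanSpace.volume_preserving_symm_measurableEquiv_toLp (Fin n)
  have hG_int : Integrable G := by
    have := (mp.integrable_comp_emb
      (MeasurableEquiv.measurableEmbedding _)).mpr hPi_int
    exact this
  have hG_val : ∫ x, G x = 8 * √(4 * π * R) ^ (n - 1) := by
    have h1 : ∫ x, G x = ∫ v : Fin n → ℝ, ∏ i, g i (v i) := by
      rw [← mp.integral_comp (MeasurableEquiv.measurableEmbedding _)]
      rfl
    rw [h1, integral_fintype_prod_volume_eq_prod]
    rw [← Finset.mul_prod_erase Finset.univ _ (Finset.mem_univ i0), hg_i0]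
    congr 1
    rw [Finset.prod_congr rfl (fun i hi => hg_other i (Finset.ne_of_mem_erase hi)),
      Finset.prod_const, Finset.card_erase_of_mem (Finset.mem_univ i0),
      Finset.card_univ, Fintype.card_fin]
  -- pointwise bound on the ball
  have hpoint : ∀ x ∈ closedBall (0 : Euc n) R,
      exp (x i0) + exp (-(x i0)) ≤ exp R * G x := by
    intro x hx
    have hxnorm : ‖x‖ ≤ R := by simpa using mem_closedBall_iff_norm.mp hx
    have hsum : ∑ i, (x i) ^ 2 ≤ R ^ 2 := by
      have h := EuclideanSpace.norm_eq x
      have h2 : √(∑ i, ‖x i‖ ^ 2) ≤ R := h ▸ hxnorm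
      have h3 : (0:ℝ) ≤ ∑ i, ‖x i‖ ^ 2 := Finset.sum_nonneg fun i _ => sq_nonneg _
      have := Real.sq_sqrt h3
      nlinarith [Real.sqrt_nonneg (∑ i, ‖x i‖ ^ 2),
        (by simp [Real.norm_eq_abs, sq_abs] : ∑ i, ‖x i‖ ^ 2 = ∑ i, (x i) ^ 2)]
    set S : ℝ := ∑ i ∈ Finset.univ.erase i0, (x i) ^ 2 with hS
    have hS_nonneg : 0 ≤ S := Finset.sum_nonneg fun i _ => sq_nonneg _
    have hsplit : (x i0) ^ 2 + S = ∑ i, (x i) ^ 2 := by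
      rw [hS, add_comm, Finset.sum_erase_add]
      exact Finset.mem_univ i0
    set y : ℝ := x i0 with hy
    have hy2 : y ^ 2 + S ≤ R ^ 2 := by rw [hy, hsplit]; exact hsum
    have hyabs : |y| ≤ R := by
      nlinarith [sq_abs y, abs_nonneg y]
    have hyle : y ≤ R := (abs_le.mp hyabs).2
    have hyge : -R ≤ y := (abs_le.mp hyabs).1
    -- key division bound
    have hdiv : S / (4 * R) ≤ (R - y) / 2 := by
      rw [div_le_div_iff₀ (by positivity) (by norm_num)]
      nlinarith
    have hdiv2 : S / (4 * R) ≤ (R + y) / 2 := by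
      rw [div_le_div_iff₀ (by positivity) (by norm_num)]
      nlinarith
    -- compute G x
    have hGx : G x = (exp (-(R - y) / 2) + exp (-(R + y) / 2)) * exp (-(S / (4 * R))) := by
      show (∏ i, g i (x i)) = _
      rw [← Finset.mul_prod_erase Finset.univ _ (Finset.mem_univ i0)]
      congr 1
      · simp only [hg, if_true]
        rw [abs_of_nonpos (by linarith : y - R ≤ 0), abs_of_nonneg (by linarith : 0 ≤ y + R)]
        ring_nf
      · have hco : ∀ i ∈ Finset.univ.erase i0,
            g i (x i) = exp (-(1 / (4 * R)) * (x i) ^ 2) := fun i hi => by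
          simp only [hg, Finset.ne_of_mem_erase hi, if_false]
        rw [Finset.prod_congr rfl hco, ← Real.exp_sum, ← Finset.mul_sum, ← hS]
        congr 1
        field_simp
    rw [hGx]
    have key1 : exp y ≤ exp R * (exp (-(R - y) / 2) * exp (-(S / (4 * R)))) := by
      rw [← Real.exp_add, ← Real.exp_add, Real.exp_le_exp]
      linarith
    have key2 : exp (-y) ≤ exp R * (exp (-(R + y) / 2) * exp (-(S / (4 * R)))) := by
      rw [← Real.exp_add, ← Real.exp_add, Real.exp_le_exp]
      linarith
    calc exp y + exp (-y)
        ≤ exp R * (exp (-(R - y) / 2) * exp (-(S / (4 * R))))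
          + exp R * (exp (-(R + y) / 2) * exp (-(S / (4 * R)))) := add_le_add key1 key2
      _ = exp R * ((exp (-(R - y) / 2) + exp (-(R + y) / 2)) * exp (-(S / (4 * R)))) := by ring
  -- the integral comparison
  have hf_cont : Continuous fun x : Euc n => exp (x i0) + exp (-(x i0)) := by
    have hcoord : Continuous fun x : Euc n => x i0 :=
      (EuclideanSpace.proj (𝕜 := ℝ) i0).continuous
    exact (Real.continuous_exp.comp hcoord).add
      (Real.continuous_exp.comp hcoord.neg)
  have step1 : (∫ x in closedBall (0 : Euc n) R, exp (x i0) + exp (-(x i0)))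
      ≤ ∫ x in closedBall (0 : Euc n) R, exp R * G x := by
    refine setIntegral_mono_on ?_ ?_ (measurableSet_closedBall) hpoint
    · exact hf_cont.continuousOn.integrableOn_compact (isCompact_closedBall _ _)
    · exact (hG_int.const_mul _).integrableOn
  have step2 : (∫ x in closedBall (0 : Euc n) R, exp R * G x)
      ≤ ∫ x, exp R * G x := by
    refine setIntegral_le_integral (hG_int.const_mul _) (ae_of_all _ fun x => ?_)
    have := hg_nonneg
    positivity
  have step3 : (∫ x, exp R * G x) = exp R * (8 * √(4 * π * R) ^ (n - 1)) := by
    rw [integral_const_mul, hG_val]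
  -- final arithmetic
  have hpow : √(4 * π * R) ^ (n - 1)
      = (4 * π) ^ (((n : ℝ) - 1) / 2) * R ^ (((n : ℝ) - 1) / 2) := by
    rw [Real.sqrt_eq_rpow, ← Real.rpow_natCast ((4 * π * R) ^ ((1:ℝ)/2)) (n - 1),
      ← Real.rpow_mul (by positivity), Real.mul_rpow hπ.le hR0.le]
    congr 2 <;>
    · rw [Nat.cast_sub (by omega)]
      push_cast
      ring
  calc (∫ x in closedBall (0 : Euc n) R, exp (x i0) + exp (-(x i0)))
      ≤ ∫ x, exp R * G x := le_trans step1 step2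
    _ = exp R * (8 * √(4 * π * R) ^ (n - 1)) := step3
    _ = 8 * (4 * π) ^ (((n : ℝ) - 1) / 2) * exp R * R ^ (((n : ℝ) - 1) / 2) := by
        rw [hpow]; ring

end
end
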